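/- arXiv:2003.01633 — 5 statements merged into one kernel-verified Lean document; each statement's English description precedes it below -/
import Mathlib

section
/- The maximal operator M_R associated with the Rubio de Francia basis R is not of weak type (1,1): for every constant C > 0 there exist f ∈ L¹(T^ω) and λ > 0 such that λ·m({g ∈ T^ω : M_R f(g) > λ}) > C·‖f‖_{L¹}. -/
open MeasureTheory Filter Topology Set
open scoped ENNReal

noncomputable section

/-- The one-dimensional torus `𝕋 = ℝ/ℤ`. -/
abbrev 𝕋 : Type := AddCircle (1 : ℝ)

/-- The infinite-dimensional torus `𝕋^ω`. -/
abbrev Tω : Type := ℕ → 𝕋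

/-- The normalized Haar measure `m` on `𝕋^ω` (which coincides with the countable
product of the Lebesgue probability measures on the factors). -/
def haarTω : Measure Tω := Measure.addHaarMeasure ⊤

/-- The metric `ρ(g,h) = ∑ₙ 2⁻ⁿ · min(|gₙ−hₙ|, 1−|gₙ−hₙ|)`; the norm on `AddCircle 1`
is exactly `min(|·|, 1−|·|)` of a representative. Coordinates are indexed from `0`. -/
def rho (g h : Tω) : ℝ := ∑' n : ℕ, (1 / 2 : ℝ) ^ (n + 1) * ‖g n - h n‖

/-- The diameter of a set with respect to `ρ`. -/
def diam (E : Set Tω) : ℝ := sSup (Set.image2 rho E E)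

/-- The average `f_E = m(E)⁻¹ ∫_E f dm`. -/
def avg (f : Tω → ℝ) (E : Set Tω) : ℝ := ⨍ x in E, f x ∂haarTω

/-- `B(g) = {B ∈ 𝓑 : g ∈ closure B}` (non-centered basis associated to a collection). -/
def basisOf (𝓑 : Set (Set Tω)) (g : Tω) : Set (Set Tω) := {B ∈ 𝓑 | g ∈ closure B}

/-- `M_B f (g) > lam`, i.e. `sup_{B ∈ bas g} |f_B| > lam`. -/
def maximalGT (bas : Tω → Set (Set Tω)) (f : Tω → ℝ) (g : Tω) (lam : ℝ) : Prop :=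
  ∃ B ∈ bas g, lam < |avg f B|

/-- `M_{B,r₀} f (g) > lam` for the truncated maximal operator. -/
def maximalTruncGT (bas : Tω → Set (Set Tω)) (r₀ : ℝ) (f : Tω → ℝ) (g : Tω) (lam : ℝ) :
    Prop :=
  ∃ B ∈ bas g, diam B < r₀ ∧ lam < |avg f B|

/-- A sequence `S` contracts to `g` (written `Sₙ ⇒ g`). -/
def ContractsTo (bas : Tω → Set (Set Tω)) (S : ℕ → Set Tω) (g : Tω) : Prop :=
  (∀ n, S n ∈ bas g) ∧ Tendsto (fun n => diam (S n)) atTop (𝓝 0)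

/-- A general differentiation basis: each `B ∈ bas g` is measurable, of strictly positive
measure, with `g` in its closure, and each `g` admits a contracting sequence. -/
def IsGeneralBasis (bas : Tω → Set (Set Tω)) : Prop :=
  (∀ g, ∀ B ∈ bas g, MeasurableSet B ∧ 0 < haarTω B ∧ g ∈ closure B) ∧
  (∀ g, ∃ S : ℕ → Set Tω, ContractsTo bas S g)

/-- `bas` differentiates `L¹(𝕋^ω)`. -/
def DifferentiatesL1 (bas : Tω → Set (Set Tω)) : Prop :=
  ∀ f : Tω → ℝ, Integrable f haarTω →
    ∀ᵐ g ∂haarTω, ∀ S : ℕ → Set Tω, ContractsTo bas S g →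
      Tendsto (fun n => avg f (S n)) atTop (𝓝 (f g))

/-- The maximal operator of `bas` is of weak type (1,1). -/
def WeakType11 (bas : Tω → Set (Set Tω)) : Prop :=
  ∃ C : ℝ, 0 < C ∧ ∀ f : Tω → ℝ, Integrable f haarTω → ∀ lam : ℝ, 0 < lam →
    lam * (haarTω {g | maximalGT bas f g lam}).toReal ≤ C * ∫ x, |f x| ∂haarTω

/-- An interval of `𝕋`: the image under the quotient map `ℝ → ℝ/ℤ` of an interval
of `ℝ` of length at most 1. -/
def IsArc (S : Set 𝕋) : Prop :=
  ∃ J : Set ℝ, J.OrdConnected ∧ (∃ a : ℝ, J ⊆ Set.Icc a (a + 1)) ∧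
    S = (fun x : ℝ => (x : 𝕋)) '' J

/-- An interval of `𝕋^ω`: a product of intervals of `𝕋`, all but finitely many
of which are the whole `𝕋`. -/
def IsBox (I : Set Tω) : Prop :=
  ∃ (s : Finset ℕ) (F : ℕ → Set 𝕋), (∀ n, IsArc (F n)) ∧ (∀ n ∉ s, F n = Set.univ) ∧
    I = Set.pi Set.univ F

/-- Conditions (B1)–(B3) for a collection of subsets of `𝕋^ω` of strictly positive
measure: (B1) every element is an interval; (B2) translation invariance;
(B3) elements of arbitrarily small diameter. -/
def SatisfiesB (𝓑 : Set (Set Tω)) : Prop :=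
  (∀ B ∈ 𝓑, 0 < haarTω B) ∧
  (∀ B ∈ 𝓑, IsBox B) ∧
  (∀ B ∈ 𝓑, ∀ g : Tω, (fun x => g + x) '' B ∈ 𝓑) ∧
  (∀ ε : ℝ, 0 < ε → ∃ B ∈ 𝓑, diam B < ε)

/-- The image in `𝕋` of the real interval `(0, l)`. -/
def arc (l : ℝ) : Set 𝕋 := (fun x : ℝ => (x : 𝕋)) '' Set.Ioo 0 l

/-- For `n = m² + r` with `m = ⌊√n⌋`, `0 ≤ r ≤ 2m`, this encodes the side of the
`i`-th coordinate (0-indexed) of `V_n`: `some k` means the side `(0, 2⁻ᵏ)`, and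
`none` means the whole `𝕋`. -/
def sideLen (n i : ℕ) : Option ℕ :=
  let m := Nat.sqrt n
  let r := n - m * m
  if r = 0 then (if i < m then some m else none)
  else if r ≤ m then (if i < m then some m else if i = m then some r else none)
  else (if i < r - m then some (m + 1) else if i < m + 1 then some m else none)

/-- The open interval `V_n ⊆ 𝕋^ω`. -/
def Vcell (n : ℕ) : Set Tω :=
  Set.pi Set.univ fun i => match sideLen n i with
    | some k => arc ((2 : ℝ)⁻¹ ^ k)
    | none => Set.univ

/-- The Rubio de Francia basis `R = {g + Vₙ : n ≥ 1, g ∈ 𝕋^ω}`. -/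
def RdF : Set (Set Tω) := {S | ∃ n : ℕ, 1 ≤ n ∧ ∃ g : Tω, S = (fun x => g + x) '' Vcell n}

/-- `δ_k^B = sup{ m(E) : E measurable, ∃ f ∈ L¹, λ > 0, M_B f > λ on E and
λ·m(E) > 2^k·‖f‖₁ }` (with `sup ∅ = 0`). -/
def deltaK (bas : Tω → Set (Set Tω)) (k : ℕ) : ℝ≥0∞ :=
  sSup {v : ℝ≥0∞ | ∃ E : Set Tω, MeasurableSet E ∧ v = haarTω E ∧
    ∃ f : Tω → ℝ, Integrable f haarTω ∧ ∃ lam : ℝ, 0 < lam ∧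
      (∀ g ∈ E, maximalGT bas f g lam) ∧
      ENNReal.ofReal ((2 : ℝ) ^ k * ∫ x, |f x| ∂haarTω) < ENNReal.ofReal lam * haarTω E}

/-- `δ̃_k^B`: as `δ_k^B`, with `M_B` replaced by the truncated operator `M_{B,α_k}`. -/
def deltaTildeK (bas : Tω → Set (Set Tω)) (α : ℕ → ℝ) (k : ℕ) : ℝ≥0∞ :=
  sSup {v : ℝ≥0∞ | ∃ E : Set Tω, MeasurableSet E ∧ v = haarTω E ∧
    ∃ f : Tω → ℝ, Integrable f haarTω ∧ ∃ lam : ℝ, 0 < lam ∧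
      (∀ g ∈ E, maximalTruncGT bas (α k) f g lam) ∧
      ENNReal.ofReal ((2 : ℝ) ^ k * ∫ x, |f x| ∂haarTω) < ENNReal.ofReal lam * haarTω E}

/-- Condition (M). -/
def CondM (bas : Tω → Set (Set Tω)) : Prop :=
  ∃ F : Set Tω, haarTω Fᶜ = 0 ∧ ∀ g ∈ F, ∀ ε : ℝ, 0 < ε → ∃ δ : ℝ, 0 < δ ∧
    ∀ E ∈ bas g, haarTω E < ENNReal.ofReal δ → diam E < ε

instance : Fact ((0 : ℝ) < 1) := ⟨one_pos⟩

/-- The canonical representative in `[0,1)` of a point of `𝕋`. -/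
def rep (x : 𝕋) : ℝ := ((AddCircle.equivIco 1 0 x : Set.Ico (0 : ℝ) (0 + 1)) : ℝ)

/-- The cylinder set over the coordinates `K+1, …, K+(L+1)²` (paper numbering, i.e.
0-indexed coordinates `K, …, K+(L+1)²-1`) determined by `S ⊆ [0,1)^{(L+1)²}`. -/
def cylinder (K L : ℕ) (S : Set (Fin ((L + 1) ^ 2) → ℝ)) : Set Tω :=
  {g | (fun j : Fin ((L + 1) ^ 2) => rep (g (K + (j : ℕ)))) ∈ S}

/-- `U_n = (0,2⁻ⁿ)ⁿ × ∏_{i>n} 𝕋`. -/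
def Ucell (n : ℕ) : Set Tω :=
  Set.pi Set.univ fun i => if i < n then arc ((2 : ℝ)⁻¹ ^ n) else Set.univ

/-- `e_{n,i}`: the element whose `i`-th coordinate (0-indexed) is `2⁻ⁿ`, others `0`. -/
def evec (n i : ℕ) : Tω := fun j => if j = i then (((2 : ℝ)⁻¹ ^ n : ℝ) : 𝕋) else 0

/-- `U_{n,i} = U_n ∪ (e_{n,i} + U_n)`. -/
def Uni (n i : ℕ) : Set Tω := Ucell n ∪ ((fun x => evec n i + x) '' Ucell n)

/-- The collection `D₀ = {U_{n,i} : n ≥ 1, 1 ≤ i ≤ n}` (0-indexed: `i < n`). -/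
def D0 : Set (Set Tω) := {S | ∃ n : ℕ, 1 ≤ n ∧ ∃ i : ℕ, i < n ∧ S = Uni n i}

/-- The open box `∏ᵢ (0, αᵢ) ⊆ ℝ^{n²}`. -/
def box (n : ℕ) (α : Fin (n ^ 2) → ℝ) : Set (Fin (n ^ 2) → ℝ) :=
  Set.pi Set.univ fun i => Set.Ioo 0 (α i)

/-- The dilated box `(1+1/n)·∏ᵢ (0, αᵢ)`. -/
def bigBox (n : ℕ) (α : Fin (n ^ 2) → ℝ) : Set (Fin (n ^ 2) → ℝ) :=
  Set.pi Set.univ fun i => Set.Ioo 0 ((1 + 1 / (n : ℝ)) * α i)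

open Classical in
/-- The set `J` of points of the dilated box having at least `4n` coordinates `xᵢ` with
`xᵢ ∈ [αᵢ, (1+1/n)αᵢ)`. -/
def Jset (n : ℕ) (α : Fin (n ^ 2) → ℝ) : Set (Fin (n ^ 2) → ℝ) :=
  {x ∈ bigBox n α |
    4 * n ≤ (Finset.univ.filter fun i => x i ∈ Set.Ico (α i) ((1 + 1 / (n : ℝ)) * α i)).card}

end


/-!
Take `f` to be the indicator of the cube `W = (0, a)^m × ∏ 𝕋` with `a = 2^{-(m+1)}`, so that
`‖f‖₁ = a^m`. Every point `g` of the larger cube `(-a, 2a)^m × ∏ 𝕋` lies in a translate of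
`V_{m²} = (0, 2a)^m × ∏ 𝕋` that also contains `W`, and the average of `f` over it is
`(a / 2a)^m = 2a > a`. Hence `a · m({M_R f > a}) ≥ a (3a)^m = 3^m a · ‖f‖₁`, and
`3^m a = (3/2)^m / 2` is unbounded in `m`.
-/

instance : IsProbabilityMeasure (volume : Measure 𝕋) :=
  ⟨by rw [AddCircle.measure_univ, ENNReal.ofReal_one]⟩

instance : IsProbabilityMeasure haarTω :=
  ⟨by rw [haarTω, ← TopologicalSpace.PositiveCompacts.coe_top, Measure.addHaarMeasure_self]⟩

instance : haarTω.IsAddLeftInvariant := by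
  rw [haarTω]; infer_instance

instance {ι : Type*} :
    (Measure.infinitePi fun _ : ι ↦ (volume : Measure 𝕋)).IsAddLeftInvariant := by
  refine ⟨fun g ↦ ?_⟩
  rw [show (g + ·) = fun x i ↦ g i + x i from rfl,
    Measure.infinitePi_map_pi _ fun i ↦ measurable_const_add (g i)]
  simp only [map_add_left_eq_self]

lemma haarTω_eq_infinitePi : haarTω = Measure.infinitePi fun _ ↦ (volume : Measure 𝕋) := by
  rw [Measure.addHaarMeasure_unique (Measure.infinitePi fun _ ↦ (volume : Measure 𝕋)) ⊤,
    TopologicalSpace.PositiveCompacts.coe_top, measure_univ, one_smul, haarTω]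

lemma volume_coe_image_Ioo {a b : ℝ} (h : b ≤ a + 1) :
    volume ((↑) '' Ioo a b : Set 𝕋) = ENNReal.ofReal (b - a) := by
  have himage : ((↑) '' Ioo a b : Set 𝕋) =
      AddCircle.equivIoc 1 a ⁻¹' (Subtype.val ⁻¹' Ioo a b) := by
    ext y
    constructor
    · rintro ⟨x, hx, rfl⟩
      rw [mem_preimage, AddCircle.equivIoc_coe_eq ⟨hx.1, hx.2.le.trans h⟩]
      exact hx
    · intro hy
      exact ⟨_, hy, AddCircle.coe_equivIoc⟩
  rw [himage, (AddCircle.measurePreserving_equivIoc 1).measure_preimage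
      (measurableSet_Ioo.preimage measurable_subtype_coe).nullMeasurableSet,
    Measure.comap_apply _ Subtype.val_injective
      (fun _ ↦ measurableSet_Ioc.subtype_image) _
      (measurableSet_Ioo.preimage measurable_subtype_coe),
    Subtype.image_preimage_coe,
    inter_eq_right.mpr (Ioo_subset_Ioc_self.trans (Ioc_subset_Ioc_right h)), Real.volume_Ioo]

lemma haarTω_pi_range (m : ℕ) {S : Set 𝕋} (hS : MeasurableSet S) :
    haarTω ((Finset.range m : Set ℕ).pi fun _ ↦ S) = volume S ^ m := by
  rw [haarTω_eq_infinitePi, Measure.infinitePi_pi _ fun _ _ ↦ hS, Finset.prod_const,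
    Finset.card_range]

lemma haarTω_real_pi_range_coe_Ioo (m : ℕ) {a b : ℝ} (hab : a ≤ b) (h : b ≤ a + 1) :
    haarTω.real ((Finset.range m : Set ℕ).pi fun _ ↦ ((↑) '' Ioo a b : Set 𝕋)) =
      (b - a) ^ m := by
  rw [measureReal_def,
    haarTω_pi_range m (QuotientAddGroup.isOpenMap_coe _ isOpen_Ioo).measurableSet,
    volume_coe_image_Ioo h, ← ENNReal.ofReal_pow (sub_nonneg.mpr hab),
    ENNReal.toReal_ofReal (by positivity)]

lemma haarTω_real_pi_range_arc (m : ℕ) {l : ℝ} (h₀ : 0 ≤ l) (h₁ : l ≤ 1) :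
    haarTω.real ((Finset.range m : Set ℕ).pi fun _ ↦ arc l) = l ^ m := by
  rw [arc, haarTω_real_pi_range_coe_Ioo m h₀ (by linarith), sub_zero]

lemma measurableSet_pi_range_arc (m : ℕ) (l : ℝ) :
    MeasurableSet ((Finset.range m : Set ℕ).pi fun _ ↦ arc l) :=
  .pi (Finset.range m).countable_toSet fun _ _ ↦
    (QuotientAddGroup.isOpenMap_coe _ isOpen_Ioo).measurableSet

lemma measureReal_translate (t : Tω) (B : Set Tω) :
    haarTω.real ((t + ·) '' B) = haarTω.real B := by
  rw [measureReal_def, measureReal_def, image_add_left, measure_preimage_add]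

lemma avg_indicator_one_of_subset {W B : Set Tω} (hW : MeasurableSet W) (hWB : W ⊆ B) :
    avg (W.indicator 1) B = haarTω.real W / haarTω.real B := by
  rw [avg, setAverage_eq, integral_indicator_one hW, measureReal_restrict_apply hW,
    inter_eq_left.mpr hWB, smul_eq_mul, div_eq_inv_mul]

lemma exists_neg_add_mem_arc {a : ℝ} {y : 𝕋} (hy : y ∈ ((↑) '' Ioo (-a) (2 * a) : Set 𝕋)) :
    ∃ τ : 𝕋, -τ + y ∈ arc (2 * a) ∧ ∀ u ∈ arc a, -τ + u ∈ arc (2 * a) := by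
  obtain ⟨x, hx, rfl⟩ := hy
  have hcoe : ∀ v : ℝ, ((v - (x - 2 * a) / 3 : ℝ) : 𝕋) = -((x - 2 * a) / 3 : ℝ) + (v : 𝕋) :=
    fun v ↦ (QuotientAddGroup.mk_sub _ _ _).trans (neg_add_eq_sub _ _).symm
  -- `x ↦ (x - 2a) / 3` maps `(-a, 2a)` into `(-a, 0)`, keeping `x` inside the shifted arc.
  refine ⟨((x - 2 * a) / 3 : ℝ), ⟨x - (x - 2 * a) / 3, ?_, hcoe x⟩, ?_⟩
  · constructor <;> linarith [hx.1, hx.2]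
  · rintro _ ⟨v, hv, rfl⟩
    refine ⟨v - (x - 2 * a) / 3, ?_, hcoe v⟩
    constructor <;> linarith [hx.1, hx.2, hv.1, hv.2]

lemma exists_translate_pi_arc {ι : Type*} {s : Set ι} {a : ℝ} {g : ι → 𝕋}
    (hg : g ∈ s.pi fun _ ↦ ((↑) '' Ioo (-a) (2 * a) : Set 𝕋)) :
    ∃ t : ι → 𝕋, g ∈ (t + ·) '' s.pi (fun _ ↦ arc (2 * a)) ∧
      s.pi (fun _ ↦ arc a) ⊆ (t + ·) '' s.pi (fun _ ↦ arc (2 * a)) := by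
  have hτ : ∀ i, ∃ τ : 𝕋, i ∈ s →
      -τ + g i ∈ arc (2 * a) ∧ ∀ u ∈ arc a, -τ + u ∈ arc (2 * a) := fun i ↦ by
    by_cases hi : i ∈ s
    · exact (exists_neg_add_mem_arc (hg i hi)).imp fun _ h _ ↦ h
    · exact ⟨0, fun h ↦ absurd h hi⟩
  choose τ hτ using hτ
  simp only [image_add_left]
  exact ⟨τ, fun i hi ↦ (hτ i hi).1, fun w hw i hi ↦ (hτ i hi).2 _ (hw i hi)⟩

lemma Vcell_sq (m : ℕ) :
    Vcell (m ^ 2) = (Finset.range m : Set ℕ).pi fun _ ↦ arc ((2 : ℝ)⁻¹ ^ m) := by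
  have hside : ∀ i, sideLen (m ^ 2) i = if i < m then some m else none := fun i ↦ by
    simp [sideLen, sq]
  ext g
  simp only [Vcell, hside, Set.mem_pi, mem_univ, true_implies, Finset.coe_range, mem_Iio]
  refine forall_congr' fun i ↦ ?_
  by_cases hi : i < m <;> simp [hi]

lemma pi_coe_Ioo_subset_maximalGT {m : ℕ} (hm : 1 ≤ m) {a : ℝ} (ha : 2 * a = (2 : ℝ)⁻¹ ^ m) :
    ((Finset.range m : Set ℕ).pi fun _ ↦ ((↑) '' Ioo (-a) (2 * a) : Set 𝕋)) ⊆
      {g | maximalGT (basisOf RdF)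
        (((Finset.range m : Set ℕ).pi fun _ ↦ arc a).indicator 1) g a} := by
  intro g hg
  obtain ⟨t, hgB, hWB⟩ := exists_translate_pi_arc hg
  have ha₀ : 0 < a := by linarith [show (0 : ℝ) < 2⁻¹ ^ m by positivity]
  have ha₁ : 2 * a ≤ 1 := ha ▸ pow_le_one₀ (by norm_num) (by norm_num)
  refine ⟨_, ⟨⟨m ^ 2, Nat.one_le_pow _ _ hm, t, by rw [Vcell_sq, ← ha]⟩, subset_closure hgB⟩, ?_⟩
  rw [avg_indicator_one_of_subset (measurableSet_pi_range_arc m a) hWB, measureReal_translate,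
    haarTω_real_pi_range_arc m ha₀.le (by linarith), haarTω_real_pi_range_arc m (by linarith) ha₁,
    ← div_pow, show a / (2 * a) = 2⁻¹ by field_simp, ← ha, abs_of_pos (by linarith)]
  linarith

/-- The maximal operator `M_R` associated with the Rubio de Francia basis
is not of weak type (1,1): for every `C > 0` there exist `f ∈ L¹(𝕋^ω)` and `λ > 0` with
`λ·m({M_R f > λ}) > C·‖f‖₁`. -/
theorem rubioDeFrancia_maximal_not_weakType11 :
    ∀ C : ℝ, 0 < C → ∃ f : Tω → ℝ, Integrable f haarTω ∧ ∃ lam : ℝ, 0 < lam ∧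
      C * ∫ x, |f x| ∂haarTω <
        lam * (haarTω {g | maximalGT (basisOf RdF) f g lam}).toReal := by
  intro C hC
  obtain ⟨m, hCm, hm⟩ := ((tendsto_pow_atTop_atTop_of_one_lt (by norm_num : (1 : ℝ) < 3 / 2)
    |>.eventually_gt_atTop (2 * C)).and (eventually_ge_atTop 1)).exists
  set a : ℝ := (2 : ℝ)⁻¹ ^ (m + 1) with ha
  have ha₀ : 0 < a := by positivity
  have h3a : 3 * a ≤ 1 := by
    have : a ≤ 2⁻¹ ^ 2 := pow_le_pow_of_le_one (by norm_num) (by norm_num) (by omega)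
    linarith
  set W := (Finset.range m : Set ℕ).pi fun _ ↦ arc a
  have hW := measurableSet_pi_range_arc m a
  refine ⟨W.indicator 1, (integrable_const 1).indicator hW, a, ha₀, ?_⟩
  have hnorm : ∫ x, |W.indicator 1 x| ∂haarTω = a ^ m := by
    have habs : (fun x ↦ |W.indicator (1 : Tω → ℝ) x|) = W.indicator 1 :=
      funext fun x ↦ abs_of_nonneg (indicator_nonneg (fun _ _ ↦ zero_le_one) x)
    rw [habs, integral_indicator_one hW, haarTω_real_pi_range_arc m ha₀.le (by linarith)]
  have hE := measureReal_mono (μ := haarTω)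
    (pi_coe_Ioo_subset_maximalGT hm (show 2 * a = 2⁻¹ ^ m by rw [ha, pow_succ]; ring))
  rw [haarTω_real_pi_range_coe_Ioo m (by linarith) (by linarith),
    show 2 * a - -a = 3 * a by ring] at hE
  have h3m : (3 / 2 : ℝ) ^ m = 2 * (3 ^ m * a) := by
    rw [ha, div_pow, pow_succ, inv_pow]; field_simp
  calc C * ∫ x, |W.indicator 1 x| ∂haarTω = C * a ^ m := by rw [hnorm]
    _ < 3 ^ m * a * a ^ m := mul_lt_mul_of_pos_right (by linarith) (by positivity)
    _ = a * (3 * a) ^ m := by rw [mul_pow]; ring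
    _ ≤ _ := mul_le_mul_of_nonneg_left hE ha₀.le
end

section
/- Fix ε > 0 and let B be an arbitrary collection of subsets of T^ω of strictly positive measure satisfying conditions (B1)–(B3). Then there exist measurable sets A, E ⊆ T^ω with m(A) < ε and m(E) = 1 such that for every g ∈ E there exists a sequence (Q_n)_{n≥1} ⊆ B(g) with diam(Q_n) → 0 and limsup_{n→∞} (χ_A)_{Q_n} ≥ e^{-8}, where χ_A is the indicator function of A. -/
open MeasureTheory Filter Topology Set
open scoped ENNReal

/-!
At scale `k` pick a box `B ∈ 𝓑` so small that its first `N = k⁴` sides `ℓⱼ` are at most `q / 2`,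
where `q = k⁻³`. In each of these coordinates cover `𝕋` periodically by windows of length `ℓⱼ`
separated by gaps of relative length about `q`; the product `Aₖ` of the windows has measure at most
`(1 + q)⁻ᴺ ≤ 2⁻ᵏ`. Given `g`, translate `B` coordinatewise so that its closure contains `g` and each
side lies inside a window, except where `gⱼ` falls into a gap, where a fraction `1 - 2q` of the side
is still covered. By Markov's inequality, off a set of measure `k⁻²` the point `g` falls into fewer
than `T = 2k³` gaps, so the translate meets `Aₖ` in proportion at least `(1 - 2q)ᵀ ≥ e⁻⁸`.
Take `A = ⋃ₖ Aₖ` and conclude by Borel–Cantelli.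
-/

namespace InfiniteTorus

open scoped Finset

instance : IsProbabilityMeasure haarTω :=
  ⟨by rw [haarTω, ← TopologicalSpace.PositiveCompacts.coe_top]; exact Measure.addHaarMeasure_self⟩

instance : haarTω.IsAddHaarMeasure := by
  unfold haarTω; infer_instance

instance : IsProbabilityMeasure (volume : Measure 𝕋) :=
  ⟨by simp [AddCircle.measure_univ]⟩

lemma map_haarTω_eq {H : Type*} [AddCommGroup H] [TopologicalSpace H] [IsTopologicalAddGroup H]
    [CompactSpace H] [MeasurableSpace H] [BorelSpace H] [SecondCountableTopology H]
    (μ : Measure H) [μ.IsAddHaarMeasure] [IsProbabilityMeasure μ]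
    (φ : Tω →+ H) (hφ : Continuous φ) (hsurj : Function.Surjective φ) :
    haarTω.map φ = μ := by
  have : (haarTω.map φ).IsAddHaarMeasure :=
    Measure.isAddHaarMeasure_map_of_isFiniteMeasure haarTω φ hφ hsurj
  have : IsProbabilityMeasure (haarTω.map φ) := Measure.isProbabilityMeasure_map hφ.aemeasurable
  rw [Measure.addHaarMeasure_unique (haarTω.map φ) ⊤, Measure.addHaarMeasure_unique μ ⊤,
    TopologicalSpace.PositiveCompacts.coe_top, measure_univ, measure_univ]

lemma haarTω_pi (s : Finset ℕ) {C : ℕ → Set 𝕋} (hC : ∀ j ∈ s, MeasurableSet (C j)) :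
    haarTω (Set.pi s C) = ∏ j ∈ s, volume (C j) := by
  let φ : Tω →+ (s → 𝕋) :=
    { toFun g j := g j
      map_zero' := rfl
      map_add' _ _ := rfl }
  have hφ : Continuous φ := continuous_pi fun j => continuous_apply _
  have hsurj : Function.Surjective φ := fun v => by
    classical
    exact ⟨fun n => if h : n ∈ s then v ⟨n, h⟩ else 0, funext fun j => by simp [φ]⟩
  have hpre : Set.pi s C = φ ⁻¹' Set.pi univ fun j : s => C j := by
    ext g; simp [φ, Set.mem_pi]
  rw [hpre, ← Measure.map_apply hφ.measurable (.univ_pi fun j => hC j j.2),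
    map_haarTω_eq (Measure.pi fun _ => volume) φ hφ hsurj, Measure.pi_pi (fun _ => volume),
    Finset.prod_coe_sort s fun j => volume (C j)]

lemma haarTω_preimage_eval (j : ℕ) {U : Set 𝕋} (hU : MeasurableSet U) :
    haarTω ((fun g : Tω => g j) ⁻¹' U) = volume U := by
  have := haarTω_pi {j} (C := fun _ => U) (by simpa using hU)
  rwa [Finset.coe_singleton, Set.singleton_pi, Finset.prod_singleton] at this

def arcIoo (c ℓ : ℝ) : Set 𝕋 := ((↑) : ℝ → 𝕋) '' Ioo c (c + ℓ)

def arcIcc (c ℓ : ℝ) : Set 𝕋 := ((↑) : ℝ → 𝕋) '' Icc c (c + ℓ)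

lemma coe_image_eq_preimage_equivIoc {S : Set ℝ} {t : ℝ} (hSt : S ⊆ Ioc t (t + 1)) :
    ((↑) : ℝ → 𝕋) '' S = AddCircle.equivIoc 1 t ⁻¹' (Subtype.val ⁻¹' S) := by
  ext x
  constructor
  · rintro ⟨y, hy, rfl⟩
    simpa [AddCircle.equivIoc_coe_eq (hSt hy)] using hy
  · exact fun hx => ⟨_, hx, AddCircle.coe_equivIoc⟩

lemma volume_coe_image {S : Set ℝ} {t : ℝ} (hS : MeasurableSet S) (hSt : S ⊆ Ioc t (t + 1)) :
    volume (((↑) : ℝ → 𝕋) '' S) = volume S := by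
  rw [coe_image_eq_preimage_equivIoc hSt,
    (AddCircle.measurePreserving_equivIoc 1).measure_preimage
      (measurable_subtype_coe hS).nullMeasurableSet,
    Measure.comap_apply _ Subtype.val_injective (fun _ h => measurableSet_Ioc.subtype_image h) _
      (measurable_subtype_coe hS), Subtype.image_preimage_coe, inter_eq_right.mpr hSt]

lemma isOpen_coe_image {S : Set ℝ} (hS : IsOpen S) : IsOpen (((↑) : ℝ → 𝕋) '' S) :=
  QuotientAddGroup.isOpenMap_coe _ hS

lemma volume_arcIoo (c : ℝ) {ℓ : ℝ} (hℓ : ℓ ≤ 1) : volume (arcIoo c ℓ) = ENNReal.ofReal ℓ := by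
  rw [arcIoo, volume_coe_image measurableSet_Ioo (t := c)
    (Ioo_subset_Ioc_self.trans (Ioc_subset_Ioc_right (by linarith))), Real.volume_Ioo,
    add_sub_cancel_left]

lemma volume_arcIcc_le (c : ℝ) {ℓ : ℝ} (hℓ : ℓ ≤ 1) :
    volume (arcIcc c ℓ) ≤ ENNReal.ofReal ℓ := by
  have hsub : arcIcc c ℓ ⊆ ((↑) : ℝ → 𝕋) '' {c} ∪ ((↑) : ℝ → 𝕋) '' Ioc c (c + ℓ) := by
    rintro _ ⟨y, hy, rfl⟩
    rcases hy.1.eq_or_lt with rfl | hcy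
    · exact Or.inl (mem_image_of_mem _ rfl)
    · exact Or.inr (mem_image_of_mem _ ⟨hcy, hy.2⟩)
  calc volume (arcIcc c ℓ)
      ≤ volume (((↑) : ℝ → 𝕋) '' {c}) + volume (((↑) : ℝ → 𝕋) '' Ioc c (c + ℓ)) :=
        (measure_mono hsub).trans (measure_union_le _ _)
    _ = ENNReal.ofReal ℓ := by
        rw [volume_coe_image (measurableSet_singleton c) (t := c - 1) (by simp),
          volume_coe_image measurableSet_Ioc (t := c) (Ioc_subset_Ioc_right (by linarith)),
          Real.volume_singleton, zero_add, Real.volume_Ioc, add_sub_cancel_left]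

lemma measurableSet_arcIoo (c ℓ : ℝ) : MeasurableSet (arcIoo c ℓ) :=
  (isOpen_coe_image isOpen_Ioo).measurableSet

lemma measurableSet_arcIcc (c ℓ : ℝ) : MeasurableSet (arcIcc c ℓ) :=
  (isCompact_Icc.image (AddCircle.continuous_mk' 1)).measurableSet

lemma image_add_arcIoo (a c ℓ : ℝ) :
    (fun x => (a : 𝕋) + x) '' arcIoo c ℓ = arcIoo (a + c) ℓ := by
  rw [arcIoo, arcIoo, image_image, add_assoc, ← image_const_add_Ioo, image_image]
  rfl

lemma image_add_arcIcc (a c ℓ : ℝ) :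
    (fun x => (a : 𝕋) + x) '' arcIcc c ℓ = arcIcc (a + c) ℓ := by
  rw [arcIcc, arcIcc, image_image, add_assoc, ← image_const_add_Icc, image_image]
  rfl

lemma arcIcc_subset_closure_arcIoo (c : ℝ) {ℓ : ℝ} (hℓ : 0 < ℓ) :
    arcIcc c ℓ ⊆ closure (arcIoo c ℓ) := by
  rw [arcIcc, arcIoo, ← closure_Ioo (by linarith : c ≠ c + ℓ)]
  exact image_closure_subset_closure_image (AddCircle.continuous_mk' 1)

lemma rep_mem (x : 𝕋) : rep x ∈ Ico (0 : ℝ) 1 := by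
  simpa [rep] using (AddCircle.equivIco 1 0 x).2

lemma coe_rep (x : 𝕋) : ((rep x : ℝ) : 𝕋) = x :=
  (AddCircle.equivIco 1 0).symm_apply_apply x

lemma IsArc.exists_arcIoo_subset_subset_arcIcc {S : Set 𝕋} (h : IsArc S) (hne : S.Nonempty) :
    ∃ u ℓ : ℝ, 0 ≤ ℓ ∧ ℓ ≤ 1 ∧ arcIoo u ℓ ⊆ S ∧ S ⊆ arcIcc u ℓ := by
  obtain ⟨J, hJ, ⟨a, hJa⟩, rfl⟩ := h
  obtain ⟨y, hy⟩ := hne.of_image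
  have hbelow : BddBelow J := ⟨a, fun x hx => (hJa hx).1⟩
  have habove : BddAbove J := ⟨a + 1, fun x hx => (hJa hx).2⟩
  refine ⟨sInf J, sSup J - sInf J, sub_nonneg.2 (csInf_le_csSup ⟨y, hy⟩ hbelow habove), ?_, ?_, ?_⟩
  · linarith [le_csInf ⟨y, hy⟩ fun x hx => (hJa hx).1, csSup_le ⟨y, hy⟩ fun x hx => (hJa hx).2]
  · refine image_mono fun x hx => ?_
    rw [add_sub_cancel] at hx
    obtain ⟨y₁, hy₁, hy₁x⟩ := exists_lt_of_csInf_lt ⟨y, hy⟩ hx.1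
    obtain ⟨y₂, hy₂, hxy₂⟩ := exists_lt_of_lt_csSup ⟨y, hy⟩ hx.2
    exact hJ.out hy₁ hy₂ ⟨hy₁x.le, hxy₂.le⟩
  · rw [arcIcc, add_sub_cancel]
    exact image_mono (subset_Icc_csInf_csSup hbelow habove)

lemma IsBox.exists_arc_sides {B : Set Tω} (hB : IsBox B) (hpos : 0 < haarTω B) :
    ∃ (s : Finset ℕ) (F : ℕ → Set 𝕋) (u ℓ : ℕ → ℝ), B = pi univ F ∧ (∀ j ∉ s, F j = univ) ∧
      ∀ j, 0 < ℓ j ∧ ℓ j ≤ 1 ∧ arcIoo (u j) (ℓ j) ⊆ F j ∧ F j ⊆ arcIcc (u j) (ℓ j) := by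
  obtain ⟨s, F, harc, huniv, rfl⟩ := hB
  obtain ⟨b, hb⟩ := nonempty_of_measure_ne_zero hpos.ne'
  choose u ℓ hℓ0 hℓ1 hIoo hIcc using fun j =>
    IsArc.exists_arcIoo_subset_subset_arcIcc (harc j) ⟨b j, hb j trivial⟩
  refine ⟨s, F, u, ℓ, rfl, huniv, fun j => ⟨(hℓ0 j).lt_of_ne fun hℓ => ?_, hℓ1 j, hIoo j, hIcc j⟩⟩
  -- a degenerate side would put `B` inside a null cylinder
  have hsub : pi univ F ⊆ (fun g : Tω => g j) ⁻¹' arcIcc (u j) 0 := by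
    intro g hg
    simpa [hℓ] using hIcc j (hg j trivial)
  have := (measure_mono hsub).trans_eq (haarTω_preimage_eval j (measurableSet_arcIcc _ _))
  simpa using hpos.trans_le (this.trans (volume_arcIcc_le _ zero_le_one))

lemma rho_term_le (g h : Tω) (n : ℕ) :
    (1 / 2 : ℝ) ^ (n + 1) * ‖g n - h n‖ ≤ (1 / 2) ^ (n + 1) :=
  mul_le_of_le_one_right (by positivity)
    ((AddCircle.norm_le_half_period 1 one_ne_zero).trans (by norm_num))

lemma rho_nonneg (g h : Tω) : 0 ≤ rho g h :=
  tsum_nonneg fun n => by positivity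

lemma rho_le_one (g h : Tω) : rho g h ≤ 1 := by
  have hgeom : Summable fun n : ℕ => (1 / 2 : ℝ) ^ (n + 1) :=
    summable_geometric_two.comp_injective (add_left_injective 1)
  calc rho g h ≤ ∑' n : ℕ, (1 / 2 : ℝ) ^ (n + 1) :=
        (hgeom.of_nonneg_of_le (fun n => by positivity) (rho_term_le g h)).tsum_le_tsum
          (rho_term_le g h) hgeom
    _ = 1 := by simp only [pow_succ, tsum_mul_right, tsum_geometric_two]; norm_num

lemma rho_update_update (b : Tω) (j : ℕ) (x y : 𝕋) :
    rho (Function.update b j x) (Function.update b j y) = (1 / 2 : ℝ) ^ (j + 1) * ‖x - y‖ := by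
  rw [rho, tsum_eq_single j fun n hn => by simp [hn]]
  simp

lemma rho_add_left (t g h : Tω) : rho (t + g) (t + h) = rho g h := by
  simp [rho]

lemma diam_nonneg (E : Set Tω) : 0 ≤ diam E :=
  Real.sSup_nonneg <| forall_mem_image2.2 fun g _ h _ => rho_nonneg g h

lemma rho_le_diam {E : Set Tω} {g h : Tω} (hg : g ∈ E) (hh : h ∈ E) : rho g h ≤ diam E :=
  le_csSup ⟨1, forall_mem_image2.2 fun g _ h _ => rho_le_one g h⟩ (mem_image2_of_mem hg hh)

lemma diam_image_add_left (t : Tω) (E : Set Tω) : diam ((fun x => t + x) '' E) = diam E := by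
  simp only [diam, image2_image_left, image2_image_right, rho_add_left]

lemma side_le_diam {F : ℕ → Set 𝕋} (hne : (pi univ F).Nonempty) {j : ℕ} {u ℓ : ℝ}
    (hℓ : 0 < ℓ) (hℓ1 : ℓ ≤ 1) (hF : arcIoo u ℓ ⊆ F j) :
    (1 / 2 : ℝ) ^ (j + 1) * (ℓ / 2) ≤ diam (pi univ F) := by
  obtain ⟨b, hb⟩ := hne
  have hmem : ∀ a ∈ Ioo u (u + ℓ), Function.update b j (a : 𝕋) ∈ pi univ F := fun a ha i _ => by
    rcases eq_or_ne i j with rfl | hij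
    · simpa using hF (mem_image_of_mem _ ha)
    · simpa [hij] using hb i trivial
  have hnorm : ‖((u + ℓ / 4 : ℝ) : 𝕋) - ((u + 3 * ℓ / 4 : ℝ) : 𝕋)‖ = ℓ / 2 := by
    have hℓ2 : |-(ℓ / 2)| = ℓ / 2 := by rw [abs_neg, abs_of_pos (by positivity)]
    rw [← AddCircle.coe_sub, show u + ℓ / 4 - (u + 3 * ℓ / 4) = -(ℓ / 2) by ring,
      (AddCircle.norm_coe_eq_abs_iff 1 one_ne_zero).2 (by rw [hℓ2]; norm_num; linarith), hℓ2]
  rw [← hnorm, ← rho_update_update b]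
  exact rho_le_diam (hmem _ ⟨by linarith, by linarith⟩) (hmem _ ⟨by linarith, by linarith⟩)

section Windows

def windows (J : ℕ) (ℓ : ℝ) : Set ℝ := ⋃ i ∈ Finset.range J, Ioo ((i : ℝ) / J) (i / J + ℓ)

def gaps (J : ℕ) (ℓ : ℝ) : Set ℝ := ⋃ i ∈ Finset.range J, Ioo ((i : ℝ) / J + ℓ) ((i + 1) / J)

variable {J : ℕ} {ℓ : ℝ}

lemma isOpen_windows : IsOpen (windows J ℓ) :=
  isOpen_biUnion fun _ _ => isOpen_Ioo

lemma isOpen_gaps : IsOpen (gaps J ℓ) :=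
  isOpen_biUnion fun _ _ => isOpen_Ioo

lemma volume_windows_le : volume (windows J ℓ) ≤ J * ENNReal.ofReal ℓ :=
  (measure_biUnion_finset_le _ _).trans <| by simp [Real.volume_Ioo]

lemma volume_gaps_le : volume (gaps J ℓ) ≤ J * ENNReal.ofReal (1 / J - ℓ) :=
  (measure_biUnion_finset_le _ _).trans <| by simp [Real.volume_Ioo, add_div, add_comm]

lemma div_add_le_one {i : ℕ} (hi : i < J) (hℓ : ℓ ≤ 1 / J) : (i : ℝ) / J + ℓ ≤ 1 := by
  have hJ : (0 : ℝ) < J := by exact_mod_cast (Nat.zero_le i).trans_lt hi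
  have : (i : ℝ) + 1 ≤ J := by exact_mod_cast hi
  calc (i : ℝ) / J + ℓ ≤ (i + 1) / J := by rw [add_div]; linarith
    _ ≤ 1 := (div_le_one hJ).2 this

lemma windows_subset_Ioc (hℓ : ℓ ≤ 1 / J) : windows J ℓ ⊆ Ioc 0 1 := by
  simp only [windows, iUnion_subset_iff, Finset.mem_range]
  exact fun i hi x hx => ⟨(by positivity : (0 : ℝ) ≤ i / J).trans_lt hx.1,
    hx.2.le.trans (div_add_le_one hi hℓ)⟩

lemma gaps_subset_Ioc (hℓ0 : 0 ≤ ℓ) : gaps J ℓ ⊆ Ioc 0 1 := by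
  simp only [gaps, iUnion_subset_iff, Finset.mem_range]
  exact fun i hi x hx => ⟨(by positivity : (0 : ℝ) ≤ i / J + ℓ).trans_lt hx.1,
    hx.2.le.trans (by simpa [add_div] using div_add_le_one hi (ℓ := 1 / J) le_rfl)⟩

open scoped Classical in
lemma exists_Icc_window (hJ : 0 < J) (hℓ0 : 0 ≤ ℓ) {θ : ℝ}
    (hθ : θ * ℓ ≤ 2 * ℓ - 1 / J) {r : ℝ} (hr : r ∈ Ico (0 : ℝ) 1) :
    ∃ c : ℝ, r ∈ Icc c (c + ℓ) ∧
      ENNReal.ofReal ((if r ∈ gaps J ℓ then θ else 1) * ℓ) ≤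
        volume (windows J ℓ ∩ Ioo c (c + ℓ)) := by
  have hwin : ∀ i < J, Ioo ((i : ℝ) / J) (i / J + ℓ) ⊆ windows J ℓ := fun i hi =>
    subset_biUnion_of_mem (u := fun i : ℕ => Ioo ((i : ℝ) / J) (i / J + ℓ))
      (Finset.mem_coe.2 (Finset.mem_range.2 hi))
  by_cases hgap : r ∈ gaps J ℓ
  · -- `r` is in the gap after the `i`-th window: the arc ending at `r` still meets that window
    obtain ⟨i, hi, hri⟩ := mem_iUnion₂.1 hgap
    refine ⟨r - ℓ, ⟨by linarith, by linarith⟩, ?_⟩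
    rw [if_pos hgap]
    calc ENNReal.ofReal (θ * ℓ) ≤ volume (Ioo (r - ℓ) (i / J + ℓ)) := by
          rw [Real.volume_Ioo]
          refine ENNReal.ofReal_le_ofReal ?_
          have : r < (i + 1) / J := hri.2
          rw [add_div] at this
          linarith
      _ ≤ volume (windows J ℓ ∩ Ioo (r - ℓ) (r - ℓ + ℓ)) := by
          refine measure_mono fun x hx => ⟨hwin i (Finset.mem_range.1 hi) ⟨?_, hx.2⟩, hx.1, ?_⟩
          · linarith [hx.1, hri.1]
          · linarith [hx.2, hri.1]
  · -- otherwise `r` lies in the closure of the window `⌊r J⌋`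
    set i := ⌊r * J⌋₊
    have hJ' : (0 : ℝ) < J := by exact_mod_cast hJ
    have hiJ : (i : ℝ) / J ≤ r := by
      rw [div_le_iff₀ hJ']; exact Nat.floor_le (by nlinarith [hr.1])
    have hrJ : r < (i + 1) / J := by
      rw [lt_div_iff₀ hJ']; exact Nat.lt_floor_add_one _
    have hi : i < J := by
      have : (i : ℝ) < J := by
        calc (i : ℝ) ≤ r * J := Nat.floor_le (by nlinarith [hr.1])
          _ < J := by nlinarith [hr.2]
      exact_mod_cast this
    have hrℓ : r ≤ i / J + ℓ := by
      by_contra! h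
      exact hgap (mem_iUnion₂.2 ⟨i, Finset.mem_range.2 hi, h, hrJ⟩)
    refine ⟨i / J, ⟨hiJ, hrℓ⟩, ?_⟩
    rw [if_neg hgap, one_mul, inter_eq_right.2 (hwin i hi), Real.volume_Ioo, add_sub_cancel_left]

end Windows

open scoped Classical in
def IsWindowed (W G : Set 𝕋) (ℓ θ : ℝ) : Prop :=
  ∀ x : 𝕋, ∃ c : ℝ, x ∈ arcIcc c ℓ ∧
    ENNReal.ofReal ((if x ∈ G then θ else 1) * ℓ) ≤ volume (W ∩ arcIoo c ℓ)

lemma isWindowed_windows {J : ℕ} {ℓ θ : ℝ} (hJ : 0 < J) (hℓ0 : 0 ≤ ℓ) (hℓ1 : ℓ ≤ 1)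
    (hθ : θ * ℓ ≤ 2 * ℓ - 1 / J) (hθ1 : θ ≤ 1) :
    IsWindowed (((↑) : ℝ → 𝕋) '' windows J ℓ) (((↑) : ℝ → 𝕋) '' gaps J ℓ) ℓ θ := by
  intro x
  obtain ⟨c, hrc, hvol⟩ := exists_Icc_window hJ hℓ0 hθ (rep_mem x)
  refine ⟨c, ⟨rep x, hrc, coe_rep x⟩, le_trans ?_ (hvol.trans ?_)⟩
  · refine ENNReal.ofReal_le_ofReal (mul_le_mul_of_nonneg_right ?_ hℓ0)
    by_cases hx : x ∈ ((↑) : ℝ → 𝕋) '' gaps J ℓ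
    · split_ifs <;> linarith
    · have : rep x ∉ gaps J ℓ := fun h => hx ⟨rep x, h, coe_rep x⟩
      simp [hx, this]
  · rw [← volume_coe_image (isOpen_windows.measurableSet.inter measurableSet_Ioo) (t := c)
      (inter_subset_right.trans (Ioo_subset_Ioc_self.trans (Ioc_subset_Ioc_right (by linarith))))]
    exact measure_mono (image_inter_subset _ _ _)

lemma exists_nat_one_div_mem_Icc {a b : ℝ} (ha : 0 < a) (hb : 0 < b) (hab : 1 / b + 1 ≤ 1 / a) :
    ∃ J : ℕ, 0 < J ∧ a ≤ 1 / J ∧ 1 / J ≤ b := by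
  have hJ : 1 / b ≤ ⌈1 / b⌉₊ := Nat.le_ceil _
  have hJpos : (0 : ℝ) < ⌈1 / b⌉₊ := (by positivity : (0 : ℝ) < 1 / b).trans_le hJ
  refine ⟨⌈1 / b⌉₊, by exact_mod_cast hJpos, ?_, ?_⟩
  · rw [le_one_div ha hJpos]
    exact ((Nat.ceil_lt_add_one (by positivity)).trans_le hab).le
  · rwa [one_div_le hJpos hb]

lemma exists_isWindowed {q ℓ : ℝ} (hq : 0 < q) (hq4 : q ≤ 1 / 4) (hℓ : 0 < ℓ) (hℓq : ℓ ≤ q / 2) :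
    ∃ W G : Set 𝕋, MeasurableSet W ∧ MeasurableSet G ∧
      volume W ≤ ENNReal.ofReal (1 / (1 + q)) ∧ volume G ≤ ENNReal.ofReal (2 * q) ∧
      IsWindowed W G ℓ (1 - 2 * q) := by
  obtain ⟨J, hJ, hJa, hJb⟩ : ∃ J : ℕ, 0 < J ∧ ℓ * (1 + q) ≤ 1 / J ∧ 1 / J ≤ ℓ * (1 + 2 * q) := by
    refine exists_nat_one_div_mem_Icc (by positivity) (by positivity) ?_
    rw [div_add_one (by positivity), div_le_div_iff₀ (by positivity) (by positivity)]
    nlinarith [mul_pos hq hℓ, mul_pos (mul_pos hq hq) hℓ]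
  have hJ' : (0 : ℝ) < J := by exact_mod_cast hJ
  have hJℓ : J * ℓ * (1 + q) ≤ 1 := by
    rw [le_div_iff₀ hJ'] at hJa; linarith
  have hJℓ' : 1 ≤ J * ℓ * (1 + 2 * q) := by
    rw [div_le_iff₀ hJ'] at hJb; linarith
  refine ⟨_, _, (isOpen_coe_image isOpen_windows).measurableSet,
    (isOpen_coe_image isOpen_gaps).measurableSet, ?_, ?_, isWindowed_windows hJ hℓ.le ?_ ?_ ?_⟩
  · have hsub := windows_subset_Ioc (J := J) (ℓ := ℓ) (by nlinarith)
    rw [volume_coe_image isOpen_windows.measurableSet (t := 0) (by simpa using hsub)]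
    refine volume_windows_le.trans ?_
    rw [← ENNReal.ofReal_natCast, ← ENNReal.ofReal_mul (by positivity)]
    exact ENNReal.ofReal_le_ofReal ((le_div_iff₀ (by positivity)).2 hJℓ)
  · rw [volume_coe_image isOpen_gaps.measurableSet (t := 0) (by simpa using gaps_subset_Ioc hℓ.le)]
    refine volume_gaps_le.trans ?_
    rw [← ENNReal.ofReal_natCast, ← ENNReal.ofReal_mul (by positivity)]
    refine ENNReal.ofReal_le_ofReal ?_
    rw [mul_sub, mul_one_div_cancel hJ'.ne']
    nlinarith
  · nlinarith
  · nlinarith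
  · linarith

lemma ofReal_prod_mul_haarTω_le {Q S : Set Tω} (s : Finset ℕ) {L U : ℕ → Set 𝕋} {w : ℕ → ℝ}
    (hw : ∀ j ∈ s, 0 ≤ w j) (hL : ∀ j ∈ s, MeasurableSet (L j))
    (hU : ∀ j ∈ s, MeasurableSet (U j)) (hQU : Q ⊆ Set.pi s U) (hLS : Set.pi s L ⊆ S)
    (hLU : ∀ j ∈ s, ENNReal.ofReal (w j) * volume (U j) ≤ volume (L j)) :
    ENNReal.ofReal (∏ j ∈ s, w j) * haarTω Q ≤ haarTω S :=
  calc ENNReal.ofReal (∏ j ∈ s, w j) * haarTω Q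
      ≤ (∏ j ∈ s, ENNReal.ofReal (w j)) * ∏ j ∈ s, volume (U j) := by
        rw [ENNReal.ofReal_prod_of_nonneg hw, ← haarTω_pi s hU]
        exact mul_le_mul_right (measure_mono hQU) _
    _ = ∏ j ∈ s, ENNReal.ofReal (w j) * volume (U j) := Finset.prod_mul_distrib.symm
    _ ≤ ∏ j ∈ s, volume (L j) := Finset.prod_le_prod' hLU
    _ = haarTω (Set.pi s L) := (haarTω_pi s hL).symm
    _ ≤ haarTω S := measure_mono hLS

lemma image_add_pi (t : Tω) (F : ℕ → Set 𝕋) :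
    (fun x => t + x) '' pi univ F = pi univ fun j => (fun x => t j + x) '' F j := by
  ext x
  simp [image_add_left, Set.mem_pi]

open scoped Classical in
lemma exists_add_ofReal_pow_mul_le {F : ℕ → Set 𝕋} {s n : Finset ℕ} {u ℓ : ℕ → ℝ}
    (hFs : ∀ j ∉ s, F j = univ)
    (hF : ∀ j, 0 < ℓ j ∧ ℓ j ≤ 1 ∧ arcIoo (u j) (ℓ j) ⊆ F j ∧ F j ⊆ arcIcc (u j) (ℓ j))
    {W G : ℕ → Set 𝕋} {θ : ℝ} (hθ : 0 ≤ θ) (hW : ∀ j ∈ n, MeasurableSet (W j))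
    (hwin : ∀ j ∈ n, IsWindowed (W j) (G j) (ℓ j) θ) (g : Tω) :
    ∃ t : Tω, g ∈ closure ((fun x => t + x) '' pi univ F) ∧
      ENNReal.ofReal (θ ^ #{j ∈ n | g j ∈ G j}) * haarTω ((fun x => t + x) '' pi univ F) ≤
        haarTω (Set.pi n W ∩ (fun x => t + x) '' pi univ F) := by
  have hc : ∀ j, ∃ c : ℝ, g j ∈ arcIcc c (ℓ j) ∧ (j ∈ n →
      ENNReal.ofReal ((if g j ∈ G j then θ else 1) * ℓ j) ≤ volume (W j ∩ arcIoo c (ℓ j))) := by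
    intro j
    by_cases hj : j ∈ n
    · obtain ⟨c, hgc, hc⟩ := hwin j hj (g j)
      exact ⟨c, hgc, fun _ => hc⟩
    · exact ⟨rep (g j), ⟨rep (g j), left_mem_Icc.2 (by linarith [(hF j).1]), coe_rep _⟩,
        fun h => absurd h hj⟩
  choose c hgc hcW using hc
  set t : Tω := fun j => ((c j - u j : ℝ) : 𝕋)
  have hIoo : ∀ j, arcIoo (c j) (ℓ j) ⊆ (fun x => t j + x) '' F j := fun j => by
    have h := image_mono (f := fun x => t j + x) (hF j).2.2.1
    rwa [image_add_arcIoo, sub_add_cancel] at h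
  have hIcc : ∀ j, (fun x => t j + x) '' F j ⊆ arcIcc (c j) (ℓ j) := fun j => by
    have h := image_mono (f := fun x => t j + x) (hF j).2.2.2
    rwa [image_add_arcIcc, sub_add_cancel] at h
  refine ⟨t, ?_, ?_⟩
  · rw [image_add_pi, closure_pi_set]
    exact fun j _ => closure_mono (hIoo j) (arcIcc_subset_closure_arcIoo _ (hF j).1 (hgc j))
  have hprod :
      ∏ j ∈ s ∪ n, (if j ∈ n ∧ g j ∈ G j then θ else 1) = θ ^ #{j ∈ n | g j ∈ G j} := by
    rw [Finset.prod_ite, Finset.prod_const, Finset.prod_const_one, mul_one]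
    congr 2
    ext j
    simp only [Finset.mem_filter, Finset.mem_union]
    tauto
  rw [← hprod, image_add_pi]
  refine ofReal_prod_mul_haarTω_le (s ∪ n)
    (L := fun j => (if j ∈ n then W j else univ) ∩ arcIoo (c j) (ℓ j))
    (U := fun j => arcIcc (c j) (ℓ j)) (fun j _ => by split_ifs <;> linarith)
    (fun j hj => ?_) (fun j _ => measurableSet_arcIcc _ _) (fun x hx j _ => hIcc j (hx j trivial))
    (fun x hx => ⟨fun j hj => ?_, fun j _ => ?_⟩) (fun j _ => ?_)
  · refine MeasurableSet.inter ?_ (measurableSet_arcIoo _ _)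
    split_ifs with hjn
    exacts [hW j hjn, .univ]
  · have h : x j ∈ (if j ∈ n then W j else univ) ∩ _ := hx j (Finset.mem_union_right _ hj)
    rw [if_pos (Finset.mem_coe.1 hj)] at h
    exact h.1
  · show x j ∈ (fun x => t j + x) '' F j
    by_cases hj : j ∈ s ∪ n
    · exact hIoo j (hx j hj).2
    · rw [hFs j (Finset.notMem_union.1 hj).1, image_add_left]
      trivial
  · refine (mul_le_mul_right (volume_arcIcc_le _ (hF j).2.1) _).trans ?_
    rw [← ENNReal.ofReal_mul (by split_ifs <;> linarith)]
    by_cases hjn : j ∈ n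
    · simpa [hjn] using hcW j hjn
    · simp [hjn, volume_arcIoo _ (hF j).2.1]

open scoped Classical in
lemma natCast_mul_measure_le_card_le_sum {α ι : Type*} [MeasurableSpace α] (μ : Measure α)
    (s : Finset ι) {E : ι → Set α} (hE : ∀ i ∈ s, MeasurableSet (E i)) (T : ℕ) :
    (T : ℝ≥0∞) * μ {x | T ≤ #{i ∈ s | x ∈ E i}} ≤ ∑ i ∈ s, μ (E i) := by
  have hcount : ∀ x, ((#{i ∈ s | x ∈ E i} : ℕ) : ℝ≥0∞) = ∑ i ∈ s, (E i).indicator 1 x := by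
    intro x
    simp [Set.indicator_apply, Finset.sum_boole]
  calc (T : ℝ≥0∞) * μ {x | T ≤ #{i ∈ s | x ∈ E i}}
      = T * μ {x | (T : ℝ≥0∞) ≤ ∑ i ∈ s, (E i).indicator 1 x} := by
        simp_rw [← hcount, Nat.cast_le]
    _ ≤ ∫⁻ x, ∑ i ∈ s, (E i).indicator 1 x ∂μ :=
        mul_meas_ge_le_lintegral₀ (Finset.aemeasurable_fun_sum _ fun i hi =>
          (measurable_const.indicator (hE i hi)).aemeasurable) _
    _ = ∑ i ∈ s, μ (E i) := by
        rw [lintegral_finsetSum s (f := fun i x => (E i).indicator 1 x)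
          fun i hi => measurable_const.indicator (hE i hi)]
        exact Finset.sum_congr rfl fun i hi => lintegral_indicator_one (hE i hi)

lemma measure_iUnion_le_ofReal_geometric {α : Type*} [MeasurableSpace α] {μ : Measure α}
    {A : ℕ → Set α} {K : ℕ} (hA : ∀ k, μ (A k) ≤ ENNReal.ofReal ((1 / 2) ^ (k + K))) :
    μ (⋃ k, A k) ≤ ENNReal.ofReal (2 * (1 / 2) ^ K) := by
  have hsum : HasSum (fun k => (1 / 2 : ℝ) ^ (k + K)) (2 * (1 / 2) ^ K) := by
    simpa only [pow_add] using hasSum_geometric_two.mul_right ((1 / 2 : ℝ) ^ K)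
  calc μ (⋃ k, A k) ≤ ∑' k, μ (A k) := measure_iUnion_le _
    _ ≤ ∑' k, ENNReal.ofReal ((1 / 2) ^ (k + K)) := ENNReal.tsum_le_tsum hA
    _ = ENNReal.ofReal (2 * (1 / 2) ^ K) := by
        rw [← ENNReal.ofReal_tsum_of_nonneg (fun _ => by positivity) hsum.summable, hsum.tsum_eq]

lemma tsum_measure_ne_top_of_le_inv_sq {α : Type*} [MeasurableSpace α] {μ : Measure α}
    {B : ℕ → Set α} {K : ℕ} (hB : ∀ k, μ (B k) ≤ ENNReal.ofReal (1 / ((k + K : ℕ) : ℝ) ^ 2)) :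
    ∑' k, μ (B k) ≠ ∞ := by
  have hsum : Summable fun k => 1 / ((k + K : ℕ) : ℝ) ^ 2 :=
    (summable_nat_add_iff (f := fun n : ℕ => 1 / (n : ℝ) ^ 2) K).2
      (Real.summable_one_div_nat_pow.2 one_lt_two)
  refine ne_top_of_le_ne_top ?_ (ENNReal.tsum_le_tsum hB)
  rw [← ENNReal.ofReal_tsum_of_nonneg (fun _ => by positivity) hsum]
  exact ENNReal.ofReal_ne_top

lemma exists_measure_eq_one_eventually_notMem {α : Type*} [MeasurableSpace α] {μ : Measure α}
    [IsProbabilityMeasure μ] {B : ℕ → Set α} (hB : ∑' k, μ (B k) ≠ ∞) :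
    ∃ E, MeasurableSet E ∧ μ E = 1 ∧ ∀ x ∈ E, ∀ᶠ k in atTop, x ∉ B k := by
  refine ⟨(toMeasurable μ (limsup B atTop))ᶜ, (measurableSet_toMeasurable _ _).compl, ?_,
    fun x hx => ?_⟩
  · rw [prob_compl_eq_one_sub (measurableSet_toMeasurable _ _), measure_toMeasurable,
      measure_limsup_atTop_eq_zero hB, tsub_zero]
  · have := mt (fun h => subset_toMeasurable _ _ h) hx
    simpa [mem_limsup_iff_frequently_mem] using this

lemma avg_indicator_one {A : Set Tω} (hA : MeasurableSet A) (Q : Set Tω) :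
    avg (A.indicator fun _ => (1 : ℝ)) Q = haarTω.real (A ∩ Q) / haarTω.real Q := by
  rw [avg, setAverage_eq, integral_indicator_const _ hA, smul_eq_mul, smul_eq_mul, mul_one,
    measureReal_restrict_apply hA, inv_mul_eq_div]

lemma avg_indicator_one_le_one {A : Set Tω} (hA : MeasurableSet A) (Q : Set Tω) :
    avg (A.indicator fun _ => (1 : ℝ)) Q ≤ 1 := by
  rw [avg_indicator_one hA]
  exact div_le_one_of_le₀ (measureReal_mono inter_subset_right) measureReal_nonneg

lemma le_avg_indicator_one {A Q : Set Tω} (hA : MeasurableSet A) (hQ : haarTω Q ≠ 0) {c : ℝ}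
    (hc : 0 ≤ c) (h : ENNReal.ofReal c * haarTω Q ≤ haarTω (A ∩ Q)) :
    c ≤ avg (A.indicator fun _ => (1 : ℝ)) Q := by
  rw [avg_indicator_one hA, measureReal_def, measureReal_def,
    le_div_iff₀ (ENNReal.toReal_pos hQ (measure_ne_top _ _)), ← ENNReal.toReal_ofReal hc,
    ← ENNReal.toReal_mul]
  exact ENNReal.toReal_mono (measure_ne_top _ _) h

lemma exp_neg_le_one_sub_pow {q : ℝ} (hq : 0 ≤ q) (hq4 : q ≤ 1 / 4) (n : ℕ) :
    Real.exp (-(4 * q * n)) ≤ (1 - 2 * q) ^ n := by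
  have h : Real.exp (-(4 * q)) ≤ 1 - 2 * q := by
    rw [Real.exp_neg, inv_le_comm₀ (Real.exp_pos _) (by linarith)]
    calc (1 - 2 * q)⁻¹ ≤ 1 + 4 * q := by
          rw [inv_le_iff_one_le_mul₀ (by linarith)]; nlinarith
      _ ≤ Real.exp (4 * q) := by linarith [Real.add_one_le_exp (4 * q)]
  rw [show -(4 * q * n) = n * -(4 * q) by ring, Real.exp_nat_mul]
  exact pow_le_pow_left₀ (Real.exp_pos _).le h n

lemma two_pow_le_one_add_pow {q : ℝ} (hq : 0 ≤ q) {n : ℕ} (h : 1 ≤ n * q) (k : ℕ) :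
    (2 : ℝ) ^ k ≤ (1 + q) ^ (n * k) := by
  rw [pow_mul]
  exact pow_le_pow_left₀ zero_le_two (by linarith [one_add_mul_le_pow (by linarith : -2 ≤ q) n]) k

lemma haarTω_pi_range_le {N : ℕ} {W : ℕ → Set 𝕋} {a : ℝ≥0∞}
    (hW : ∀ j < N, MeasurableSet (W j)) (ha : ∀ j < N, volume (W j) ≤ a) :
    haarTω (Set.pi (Finset.range N) W) ≤ a ^ N := by
  rw [haarTω_pi _ fun j hj => hW j (Finset.mem_range.1 hj)]
  calc ∏ j ∈ Finset.range N, volume (W j) ≤ ∏ _j ∈ Finset.range N, a :=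
        Finset.prod_le_prod' fun j hj => ha j (Finset.mem_range.1 hj)
    _ = a ^ N := by rw [Finset.prod_const, Finset.card_range]

open scoped Classical in
lemma haarTω_le_card_mem_le {N T : ℕ} (hT : 0 < T) {G : ℕ → Set 𝕋} {b : ℝ}
    (hG : ∀ j < N, MeasurableSet (G j)) (hGb : ∀ j < N, volume (G j) ≤ ENNReal.ofReal b) :
    haarTω {g | T ≤ #{j ∈ Finset.range N | g j ∈ G j}} ≤ ENNReal.ofReal (b * N / T) := by
  have hT' : (T : ℝ≥0∞) ≠ 0 := by exact_mod_cast hT.ne'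
  rw [ENNReal.ofReal_div_of_pos (by exact_mod_cast hT), ENNReal.ofReal_natCast,
    ENNReal.le_div_iff_mul_le (.inl hT') (.inl (ENNReal.natCast_ne_top T)), mul_comm]
  calc (T : ℝ≥0∞) * haarTω {g | T ≤ #{j ∈ Finset.range N | g j ∈ G j}}
      ≤ ∑ j ∈ Finset.range N, haarTω ((fun g : Tω => g j) ⁻¹' G j) :=
        natCast_mul_measure_le_card_le_sum haarTω (Finset.range N)
          (fun j hj => measurable_pi_apply j (hG j (Finset.mem_range.1 hj))) T
    _ ≤ ∑ _j ∈ Finset.range N, ENNReal.ofReal b := Finset.sum_le_sum fun j hj => by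
        rw [haarTω_preimage_eval j (hG j (Finset.mem_range.1 hj))]
        exact hGb j (Finset.mem_range.1 hj)
    _ = ENNReal.ofReal (b * N) := by
        rw [Finset.sum_const, Finset.card_range, nsmul_eq_mul, ← ENNReal.ofReal_natCast,
          ← ENNReal.ofReal_mul (by positivity), mul_comm]

open scoped Classical in
lemma exists_scale_data {𝓑 : Set (Set Tω)} (h𝓑 : SatisfiesB 𝓑) {q : ℝ} (hq : 0 < q)
    (hq4 : q ≤ 1 / 4) (N : ℕ) {T : ℕ} (hT : 0 < T) :
    ∃ A Bad : Set Tω, MeasurableSet A ∧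
      haarTω A ≤ ENNReal.ofReal (1 / (1 + q)) ^ N ∧
      haarTω Bad ≤ ENNReal.ofReal (2 * q * N / T) ∧
      ∀ g ∉ Bad, ∃ Q ∈ basisOf 𝓑 g, diam Q ≤ (1 / 2) ^ N * q ∧
        ENNReal.ofReal ((1 - 2 * q) ^ T) * haarTω Q ≤ haarTω (A ∩ Q) := by
  obtain ⟨hpos, hbox, htrans, hsmall⟩ := h𝓑
  obtain ⟨B, hB𝓑, hdiam⟩ := hsmall ((1 / 2) ^ N * (q / 4)) (by positivity)
  obtain ⟨s, F, u, ℓ, rfl, hFs, hF⟩ := IsBox.exists_arc_sides (hbox _ hB𝓑) (hpos _ hB𝓑)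
  have hℓq : ∀ j < N, ℓ j ≤ q / 2 := fun j hj => by
    have h1 := (side_le_diam (nonempty_of_measure_ne_zero (hpos _ hB𝓑).ne') (hF j).1 (hF j).2.1
      (hF j).2.2.1).trans_lt hdiam
    have h2 : (1 / 2 : ℝ) ^ N ≤ (1 / 2) ^ (j + 1) :=
      pow_le_pow_of_le_one (by norm_num) (by norm_num) hj
    have h3 : (0 : ℝ) < (1 / 2) ^ (j + 1) := by positivity
    nlinarith
  have hwin : ∀ j, ∃ W G : Set 𝕋, MeasurableSet W ∧ MeasurableSet G ∧
      (j < N → volume W ≤ ENNReal.ofReal (1 / (1 + q)) ∧ volume G ≤ ENNReal.ofReal (2 * q) ∧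
        IsWindowed W G (ℓ j) (1 - 2 * q)) := fun j => by
    by_cases hj : j < N
    · obtain ⟨W, G, hW, hG, h⟩ := exists_isWindowed hq hq4 (hF j).1 (hℓq j hj)
      exact ⟨W, G, hW, hG, fun _ => h⟩
    · exact ⟨∅, ∅, .empty, .empty, fun h => absurd h hj⟩
  choose W G hW hG hWG using hwin
  refine ⟨Set.pi (Finset.range N) W, {g | T ≤ #{j ∈ Finset.range N | g j ∈ G j}},
    .pi (Finset.countable_toSet _) fun j _ => hW j,
    haarTω_pi_range_le (fun j _ => hW j) fun j hj => (hWG j hj).1,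
    (haarTω_le_card_mem_le hT (fun j _ => hG j) fun j hj => (hWG j hj).2.1).trans_eq
      (by ring_nf), fun g hg => ?_⟩
  obtain ⟨t, hgt, hratio⟩ := exists_add_ofReal_pow_mul_le hFs hF (n := Finset.range N)
    (by linarith) (fun j _ => hW j) (fun j hj => (hWG j (Finset.mem_range.1 hj)).2.2) g
  refine ⟨_, ⟨htrans _ hB𝓑 t, hgt⟩, ?_, le_trans ?_ hratio⟩
  · rw [diam_image_add_left]
    refine hdiam.le.trans ?_
    gcongr
    linarith
  · exact mul_le_mul_left (ENNReal.ofReal_le_ofReal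
      (pow_le_pow_of_le_one (by linarith) (by linarith) (not_le.1 hg).le)) _

/-- The scale `k` uses `q = k⁻³`, `N = k⁴` and `T = 2k³`: then `(1 + q)⁻ᴺ ≤ 2⁻ᵏ` by Bernoulli,
`2qN / T = k⁻²`, and `(1 - 2q)ᵀ ≥ e^{-4qT} = e⁻⁸`. -/
lemma exists_scale {𝓑 : Set (Set Tω)} (h𝓑 : SatisfiesB 𝓑) {k : ℕ} (hk : 2 ≤ k) :
    ∃ A Bad : Set Tω, MeasurableSet A ∧ haarTω A ≤ ENNReal.ofReal ((1 / 2) ^ k) ∧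
      haarTω Bad ≤ ENNReal.ofReal (1 / k ^ 2) ∧
      ∀ g ∉ Bad, ∃ Q ∈ basisOf 𝓑 g, diam Q ≤ (1 / 2) ^ k ∧
        ENNReal.ofReal (Real.exp (-8)) * haarTω Q ≤ haarTω (A ∩ Q) := by
  have hk' : (2 : ℝ) ≤ k := by exact_mod_cast hk
  have hq : (0 : ℝ) < 1 / k ^ 3 := by positivity
  have hq4 : (1 : ℝ) / k ^ 3 ≤ 1 / 4 := by
    rw [div_le_div_iff₀ (by positivity) (by norm_num)]
    nlinarith [pow_le_pow_left₀ (by norm_num) hk' 3]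
  obtain ⟨A, Bad, hA, hAm, hBm, hgood⟩ :=
    exists_scale_data h𝓑 hq hq4 (k ^ 3 * k) (T := 2 * k ^ 3) (by positivity)
  refine ⟨A, Bad, hA, hAm.trans ?_, hBm.trans_eq ?_, fun g hg => ?_⟩
  · rw [← ENNReal.ofReal_pow (by positivity), div_pow, one_pow, div_pow, one_pow]
    refine ENNReal.ofReal_le_ofReal (one_div_le_one_div_of_le (by positivity) ?_)
    exact two_pow_le_one_add_pow hq.le (by push_cast; rw [mul_one_div_cancel (by positivity)]) k
  · congr 1
    push_cast
    field_simp
  · obtain ⟨Q, hQ, hdiam, hmeas⟩ := hgood g hg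
    refine ⟨Q, hQ, hdiam.trans ?_, le_trans (mul_le_mul_left (ENNReal.ofReal_le_ofReal ?_) _) hmeas⟩
    · calc (1 / 2 : ℝ) ^ (k ^ 3 * k) * (1 / k ^ 3) ≤ (1 / 2) ^ (k ^ 3 * k) :=
            mul_le_of_le_one_right (by positivity) (by linarith)
        _ ≤ (1 / 2) ^ k := pow_le_pow_of_le_one (by norm_num) (by norm_num)
            (Nat.le_mul_of_pos_left k (by positivity))
    · convert exp_neg_le_one_sub_pow hq.le hq4 (2 * k ^ 3) using 2
      push_cast
      field_simp
      norm_num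

lemma exists_contractsTo_le_limsup {bas : Tω → Set (Set Tω)} {g : Tω} {F : Set Tω → ℝ}
    {r : ℕ → ℝ} {b c : ℝ} (hr : Tendsto r atTop (𝓝 0)) (hF : ∀ Q, F Q ≤ b)
    (h : ∀ᶠ k in atTop, ∃ Q ∈ bas g, diam Q ≤ r k ∧ c ≤ F Q) :
    ∃ Q : ℕ → Set Tω, ContractsTo bas Q g ∧ c ≤ atTop.limsup fun n => F (Q n) := by
  obtain ⟨n₀, hn₀⟩ := eventually_atTop.1 h
  choose Q hQ hdiam hc using fun m => hn₀ (m + n₀) le_add_self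
  exact ⟨Q, ⟨hQ, squeeze_zero (fun m => diam_nonneg _) hdiam (hr.comp (tendsto_add_atTop_nat n₀))⟩,
    le_limsup_of_frequently_le (.of_forall hc) ⟨b, eventually_map.2 (.of_forall fun m => hF _)⟩⟩

end InfiniteTorus

open InfiniteTorus in
/-- Theorem 3.1: For any `ε > 0` and any collection `𝓑` satisfying
(B1)–(B3) there are measurable sets `A, E` with `m(A) < ε`, `m(E) = 1`, such that every
`g ∈ E` admits a sequence `(Qₙ) ⊆ 𝓑(g)` with `diam Qₙ → 0` and
`limsupₙ (χ_A)_{Qₙ} ≥ e⁻⁸`. -/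
theorem exists_bad_sets_for_translation_invariant_basis (ε : ℝ) (hε : 0 < ε)
    (𝓑 : Set (Set Tω)) (h𝓑 : SatisfiesB 𝓑) :
    ∃ A E : Set Tω, MeasurableSet A ∧ MeasurableSet E ∧
      haarTω A < ENNReal.ofReal ε ∧ haarTω E = 1 ∧
      ∀ g ∈ E, ∃ Q : ℕ → Set Tω, ContractsTo (basisOf 𝓑) Q g ∧
        Real.exp (-8) ≤ atTop.limsup (fun n => avg (A.indicator fun _ => (1 : ℝ)) (Q n)) := by
  obtain ⟨K, hK⟩ := exists_pow_lt_of_lt_one hε (by norm_num : (1 / 2 : ℝ) < 1)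
  choose A Bad hAm hA hBad hgood using fun k => exists_scale h𝓑 (k := k + (K + 2)) (by omega)
  obtain ⟨E, hE, hE1, hEBad⟩ :=
    exists_measure_eq_one_eventually_notMem (tsum_measure_ne_top_of_le_inv_sq hBad)
  have hAmeas : MeasurableSet (⋃ k, A k) := .iUnion hAm
  refine ⟨⋃ k, A k, E, hAmeas, hE, (measure_iUnion_le_ofReal_geometric hA).trans_lt
    ((ENNReal.ofReal_lt_ofReal_iff hε).2 ?_), hE1, fun g hg => ?_⟩
  · rw [pow_add]
    linarith [pow_pos (by norm_num : (0 : ℝ) < 1 / 2) K]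
  have hr : Tendsto (fun k => (1 / 2 : ℝ) ^ (k + (K + 2))) atTop (𝓝 0) :=
    (tendsto_pow_atTop_nhds_zero_of_lt_one (by norm_num) (by norm_num)).comp
      (tendsto_add_atTop_nat _)
  refine exists_contractsTo_le_limsup hr (avg_indicator_one_le_one hAmeas)
    ((hEBad g hg).mono fun k hk => ?_)
  obtain ⟨Q, hQ, hdiam, hmeas⟩ := hgood k g hk
  exact ⟨Q, hQ, hdiam, le_avg_indicator_one hAmeas (h𝓑.1 Q hQ.1).ne' (Real.exp_pos _).le
    (hmeas.trans (measure_mono (inter_subset_inter_left _ (subset_iUnion _ k))))⟩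
end

section
/- Fix an integer n ≥ 1 and strictly positive real numbers α_1, …, α_{n²}. Let I = ∏_{i=1}^{n²} (0, α_i) ⊆ ℝ^{n²}, let (1+1/n)I = ∏_{i=1}^{n²} (0, (1+1/n)α_i), and let J = {x = (x_1,…,x_{n²}) ∈ (1+1/n)I : #{i ∈ {1,…,n²} : x_i ∈ [α_i, (1+1/n)α_i)} ≥ 4n}. Then the Lebesgue measures satisfy |J| < (1/2)·|(1+1/n)I|. -/
open MeasureTheory Filter Topology Set
open scoped ENNReal

/-! A point of `J` has some `4n` coordinates in the top slabs `[αᵢ, (1+1/n)αᵢ)`, each of which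
fills the fraction `1/(n+1)` of its side of `(1+1/n)I`. A union bound over the `C(n², 4n)`
choices of these coordinates gives `|J| ≤ C(n², 4n) (n+1)^{-4n} |(1+1/n)I|`, and the estimate
`C(N, k) ≤ (eN/k)^k` bounds the factor by `(e/4)^{4n} ≤ (e/4)^4 < 1/2`. -/

open Finset
open scoped Nat

section UnionBound

variable {ι : Type*} [Fintype ι] [DecidableEq ι] {X : ι → Type*}

lemma subset_biUnion_powersetCard_pi (s t : ∀ i, Set (X i)) [∀ i, DecidablePred (· ∈ t i)]
    (k : ℕ) :
    {x ∈ Set.univ.pi s | k ≤ #{i | x i ∈ t i}} ⊆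
      ⋃ S ∈ powersetCard k (univ : Finset ι),
        Set.univ.pi fun i => if i ∈ S then s i ∩ t i else s i := by
  rintro x ⟨hxs, hk⟩
  obtain ⟨S, hSt, rfl⟩ := Finset.exists_subset_card_eq hk
  refine mem_iUnion₂.mpr ⟨S, mem_powersetCard.mpr ⟨subset_univ S, rfl⟩, fun i _ => ?_⟩
  dsimp only
  split_ifs with hi
  · exact ⟨hxs i trivial, (mem_filter.mp (hSt hi)).2⟩
  · exact hxs i trivial

variable [∀ i, MeasurableSpace (X i)] (μ : ∀ i, Measure (X i)) [∀ i, SigmaFinite (μ i)]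
  (s t : ∀ i, Set (X i)) {p : ℝ≥0∞}

lemma MeasureTheory.Measure.pi_pi_ite_inter_le (hst : ∀ i, μ i (s i ∩ t i) ≤ p * μ i (s i))
    (S : Finset ι) :
    Measure.pi μ (Set.univ.pi fun i => if i ∈ S then s i ∩ t i else s i) ≤
      p ^ #S * Measure.pi μ (Set.univ.pi s) := by
  rw [Measure.pi_pi, Measure.pi_pi]
  calc ∏ i, μ i (if i ∈ S then s i ∩ t i else s i)
      ≤ ∏ i, (if i ∈ S then p else 1) * μ i (s i) := by
        gcongr with i
        split_ifs
        · exact hst i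
        · rw [one_mul]
    _ = p ^ #S * ∏ i, μ i (s i) := by
        rw [prod_mul_distrib, prod_ite_mem, Finset.univ_inter, prod_const]

theorem MeasureTheory.Measure.pi_le_card_filter_mem_le [∀ i, DecidablePred (· ∈ t i)]
    (hst : ∀ i, μ i (s i ∩ t i) ≤ p * μ i (s i)) (k : ℕ) :
    Measure.pi μ {x ∈ Set.univ.pi s | k ≤ #{i | x i ∈ t i}} ≤
      (Fintype.card ι).choose k * p ^ k * Measure.pi μ (Set.univ.pi s) := by
  calc Measure.pi μ {x ∈ Set.univ.pi s | k ≤ #{i | x i ∈ t i}}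
      ≤ ∑ S ∈ powersetCard k (univ : Finset ι),
          Measure.pi μ (Set.univ.pi fun i => if i ∈ S then s i ∩ t i else s i) :=
        (measure_mono (subset_biUnion_powersetCard_pi s t k)).trans
          (measure_biUnion_finset_le _ _)
    _ ≤ ∑ S ∈ powersetCard k (univ : Finset ι), p ^ k * Measure.pi μ (Set.univ.pi s) := by
        refine sum_le_sum fun S hS => ?_
        rw [← (mem_powersetCard.mp hS).2]
        exact Measure.pi_pi_ite_inter_le μ s t hst S
    _ = (Fintype.card ι).choose k * p ^ k * Measure.pi μ (Set.univ.pi s) := by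
        rw [sum_const, card_powersetCard, card_univ, nsmul_eq_mul, mul_assoc]

end UnionBound

theorem Nat.choose_le_exp_mul_div_pow (N k : ℕ) :
    (N.choose k : ℝ) ≤ (Real.exp 1 * N / k) ^ k := by
  rcases k.eq_zero_or_pos with rfl | hk
  · simp
  have hfact : (k : ℝ) ^ k ≤ Real.exp 1 ^ k * k ! := by
    rw [← Real.exp_nat_mul, mul_one, ← div_le_iff₀ (by positivity)]
    exact Real.pow_div_factorial_le_exp k k.cast_nonneg k
  calc (N.choose k : ℝ) ≤ (N : ℝ) ^ k / k ! := Nat.choose_le_pow_div k N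
    _ = (N / k : ℝ) ^ k * k ^ k / k ! := by
        rw [← mul_pow, div_mul_cancel₀ _ (by positivity)]
    _ ≤ (N / k : ℝ) ^ k * (Real.exp 1 ^ k * k !) / k ! := by gcongr
    _ = (Real.exp 1 * N / k) ^ k := by
        field_simp
        ring

lemma choose_sq_div_succ_pow_lt_half {n : ℕ} (hn : 1 ≤ n) :
    ((n ^ 2).choose (4 * n) : ℝ) / (n + 1) ^ (4 * n) < 1 / 2 := by
  have hn0 : (0 : ℝ) < n := by exact_mod_cast hn
  have he : Real.exp 1 / 4 < 0.68 := by linarith [Real.exp_one_lt_d9]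
  have hchoose : ((n ^ 2).choose (4 * n) : ℝ) ≤ (Real.exp 1 * n / 4) ^ (4 * n) := by
    convert Nat.choose_le_exp_mul_div_pow (n ^ 2) (4 * n) using 2
    push_cast
    field_simp
  calc ((n ^ 2).choose (4 * n) : ℝ) / (n + 1) ^ (4 * n)
      ≤ (Real.exp 1 * n / 4 / (n + 1)) ^ (4 * n) := by
        rw [div_pow]
        gcongr
    _ ≤ (Real.exp 1 / 4) ^ (4 * n) := by
        refine pow_le_pow_left₀ (by positivity) ?_ _
        rw [div_le_iff₀ (by positivity)]
        nlinarith [Real.exp_pos 1]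
    _ ≤ (Real.exp 1 / 4) ^ 4 := pow_le_pow_of_le_one (by positivity) (by linarith) (by omega)
    _ < 0.68 ^ 4 := by gcongr
    _ < 1 / 2 := by norm_num

lemma volume_Ico_le_inv_succ_mul_volume_Ioo {n : ℕ} (hn : 1 ≤ n) (a : ℝ) :
    volume (Ico a ((1 + 1 / (n : ℝ)) * a)) ≤
      ENNReal.ofReal (1 / (n + 1)) * volume (Ioo 0 ((1 + 1 / (n : ℝ)) * a)) := by
  have hn0 : (0 : ℝ) < n := by exact_mod_cast hn
  rw [Real.volume_Ico, Real.volume_Ioo, ← ENNReal.ofReal_mul (by positivity)]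
  refine ENNReal.ofReal_le_ofReal (le_of_eq ?_)
  field_simp
  ring

/-- Lemma 3.1: For `n ≥ 1` and `α₁,…,α_{n²} > 0`, the set `J` of points of
the dilated box `(1+1/n)·I` having at least `4n` coordinates in `[αᵢ, (1+1/n)αᵢ)`
satisfies `|J| < (1/2)·|(1+1/n)·I|`. -/
theorem measure_Jset_lt_half (n : ℕ) (hn : 1 ≤ n) (α : Fin (n ^ 2) → ℝ)
    (hα : ∀ i, 0 < α i) :
    volume (Jset n α) < 2⁻¹ * volume (bigBox n α) := by
  set q := ENNReal.ofReal (1 / (n + 1))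
  have hbox : volume (bigBox n α) = ∏ i, ENNReal.ofReal ((1 + 1 / (n : ℝ)) * α i) := by
    simp only [bigBox, Real.volume_pi_Ioo, sub_zero]
  have hbox_ne_zero : volume (bigBox n α) ≠ 0 := by
    rw [hbox, prod_ne_zero_iff]
    exact fun i _ => by simpa using mul_pos (by positivity) (hα i)
  have hbox_ne_top : volume (bigBox n α) ≠ ⊤ := by
    rw [hbox]
    exact ENNReal.prod_ne_top fun i _ => ENNReal.ofReal_ne_top
  have hscalar : ((n ^ 2).choose (4 * n) : ℝ≥0∞) * q ^ (4 * n) < 2⁻¹ := by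
    calc ((n ^ 2).choose (4 * n) : ℝ≥0∞) * q ^ (4 * n)
        = ENNReal.ofReal (((n ^ 2).choose (4 * n) : ℝ) / (n + 1) ^ (4 * n)) := by
          rw [div_eq_mul_one_div, ← one_div_pow, ENNReal.ofReal_mul (by positivity),
            ENNReal.ofReal_pow (by positivity), ENNReal.ofReal_natCast]
      _ < ENNReal.ofReal (1 / 2) :=
          (ENNReal.ofReal_lt_ofReal_iff (by norm_num)).mpr (choose_sq_div_succ_pow_lt_half hn)
      _ = 2⁻¹ := by rw [one_div, ENNReal.ofReal_inv_of_pos two_pos, ENNReal.ofReal_ofNat]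
  have hJ := Measure.pi_le_card_filter_mem_le (fun _ => volume)
    (fun i => Ioo 0 ((1 + 1 / (n : ℝ)) * α i)) (fun i => Ico (α i) ((1 + 1 / (n : ℝ)) * α i))
    (fun i => (measure_mono Set.inter_subset_right).trans
      (volume_Ico_le_inv_succ_mul_volume_Ioo hn (α i))) (4 * n)
  rw [Fintype.card_fin, ← volume_pi] at hJ
  calc volume (Jset n α)
      ≤ (n ^ 2).choose (4 * n) * q ^ (4 * n) * volume (bigBox n α) := hJ
    _ < 2⁻¹ * volume (bigBox n α) := ENNReal.mul_lt_mul_left hbox_ne_zero hbox_ne_top hscalar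
end

section
/- Fix an integer n ≥ 2 and strictly positive real numbers α_1, …, α_{n²}. Let I = ∏_{i=1}^{n²} (0, α_i) ⊆ ℝ^{n²}, let (1+1/n)I = ∏_{i=1}^{n²} (0, (1+1/n)α_i), and let J = {x = (x_1,…,x_{n²}) ∈ (1+1/n)I : #{i ∈ {1,…,n²} : x_i ∈ [α_i, (1+1/n)α_i)} ≥ 4n}. Then for every x ∈ (1+1/n)I \ J there exists y ∈ ℝ^{n²} such that x ∈ y + I and |(I + y) ∩ I| > e^{-8}·|I|. -/
open MeasureTheory Filter Topology Set
open scoped ENNReal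

/-! The translate is chosen coordinatewise: a coordinate with `xᵢ ∈ [αᵢ, (1+1/n)αᵢ)` is
shifted by `αᵢ/n`, every other coordinate stays put. Each shifted coordinate costs a factor
`1 - 1/n` of the overlap, and outside `J` fewer than `4n` coordinates are shifted, so the
overlap is more than `(1 - 1/n)^{4n} |I| ≥ e⁻⁸ |I|`. -/

section Boxes

variable {ι : Type*}

theorem image_const_add_pi_Ioo (y a b : ι → ℝ) :
    (fun z => y + z) '' pi univ (fun i => Ioo (a i) (b i)) =
      pi univ fun i => Ioo (y i + a i) (y i + b i) := by
  have hmap : (fun z => y + z) = Pi.map fun i (t : ℝ) => y i + t := rfl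
  simp only [hmap, piMap_image_univ_pi, image_const_add_Ioo]

theorem volume_const_add_image_pi_Ioo_inter [Fintype ι] {y a : ι → ℝ} (hy₀ : ∀ i, 0 ≤ y i)
    (hya : ∀ i, y i ≤ a i) :
    volume ((fun z => y + z) '' pi univ (fun i => Ioo 0 (a i)) ∩ pi univ fun i => Ioo 0 (a i))
      = ENNReal.ofReal (∏ i, (a i - y i)) := by
  have hinter : (fun z => y + z) '' pi univ (fun i => Ioo 0 (a i)) ∩
      pi univ (fun i => Ioo 0 (a i)) = pi univ fun i => Ioo (y i) (a i) := by
    rw [image_const_add_pi_Ioo, ← pi_inter_distrib]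
    refine pi_congr rfl fun i _ => ?_
    rw [Ioo_inter_Ioo, add_zero, max_eq_left (hy₀ i), min_eq_right (by linarith [hy₀ i])]
  rw [hinter, Real.volume_pi_Ioo, ENNReal.ofReal_prod_of_nonneg fun i _ => sub_nonneg.2 (hya i)]

noncomputable def overlapShift (t : ℝ) (a x : ι → ℝ) : ι → ℝ :=
  fun i => if a i ≤ x i then t * a i else 0

variable {t : ℝ} {a x : ι → ℝ}

theorem overlapShift_nonneg (ht : 0 ≤ t) (ha : ∀ i, 0 ≤ a i) :
    0 ≤ overlapShift t a x := fun i => by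
  unfold overlapShift; split_ifs
  exacts [mul_nonneg ht (ha i), le_rfl]

theorem overlapShift_le (ht : t ≤ 1) (ha : ∀ i, 0 ≤ a i) : overlapShift t a x ≤ a := fun i => by
  unfold overlapShift; split_ifs
  exacts [mul_le_of_le_one_left (ha i) ht, ha i]

theorem mem_overlapShift_add_image (ht : t < 1) (ha : ∀ i, 0 < a i)
    (hx : x ∈ pi univ fun i => Ioo 0 ((1 + t) * a i)) :
    x ∈ (fun z => overlapShift t a x + z) '' pi univ fun i => Ioo 0 (a i) := by
  rw [image_const_add_pi_Ioo]
  intro i _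
  obtain ⟨hx₀, hx₁⟩ := hx i (mem_univ i)
  have hta : t * a i < a i := mul_lt_of_lt_one_left (ha i) ht
  simp only [overlapShift, mem_Ioo, add_zero]
  split_ifs <;> constructor <;> linarith

theorem prod_sub_overlapShift [Fintype ι] [DecidablePred fun i => a i ≤ x i] :
    ∏ i, (a i - overlapShift t a x i) =
      (1 - t) ^ (Finset.univ.filter fun i => a i ≤ x i).card * ∏ i, a i := by
  have hfactor : ∀ i, a i - overlapShift t a x i = (if a i ≤ x i then 1 - t else 1) * a i := by
    intro i
    unfold overlapShift
    split_ifs <;> ring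
  simp_rw [hfactor]
  rw [Finset.prod_mul_distrib, Finset.prod_ite, Finset.prod_const, Finset.prod_const_one, mul_one]

end Boxes

theorem exp_neg_two_div_le_one_sub_inv {n : ℝ} (hn : 2 ≤ n) :
    Real.exp (-(2 / n)) ≤ 1 - 1 / n := by
  have hn₀ : 0 < n := by linarith
  have hpos : 0 < 1 + 2 / n := by positivity
  calc Real.exp (-(2 / n)) = 1 / Real.exp (2 / n) := by rw [Real.exp_neg, one_div]
    _ ≤ 1 / (1 + 2 / n) :=
        one_div_le_one_div_of_le hpos (by linarith [Real.add_one_le_exp (2 / n)])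
    _ ≤ 1 - 1 / n := by
      rw [div_le_iff₀ hpos]
      have hsq : 2 / n ^ 2 ≤ 1 / n := by
        rw [div_le_div_iff₀ (by positivity) hn₀]; nlinarith
      have hexpand : (1 - 1 / n) * (1 + 2 / n) = 1 + (1 / n - 2 / n ^ 2) := by ring
      linarith

theorem exp_neg_eight_lt_one_sub_inv_pow {n k : ℕ} (hn : 2 ≤ n) (hk : k < 4 * n) :
    Real.exp (-8) < (1 - 1 / (n : ℝ)) ^ k := by
  have hn' : (2 : ℝ) ≤ n := by exact_mod_cast hn
  have hinv₀ : 0 < 1 / (n : ℝ) := by positivity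
  have hinv₁ : 1 / (n : ℝ) < 1 := by rw [div_lt_one (by linarith)]; linarith
  calc Real.exp (-8) = Real.exp (-(2 / n)) ^ (4 * n) := by
        rw [← Real.exp_nat_mul]; congr 1; push_cast; field_simp; norm_num
    _ ≤ (1 - 1 / (n : ℝ)) ^ (4 * n) :=
        pow_le_pow_left₀ (Real.exp_pos _).le (exp_neg_two_div_le_one_sub_inv hn') _
    _ < (1 - 1 / (n : ℝ)) ^ k := pow_lt_pow_right_of_lt_one₀ (by linarith) (by linarith) hk

/-- Lemma 3.2: For `n ≥ 2`, every `x ∈ (1+1/n)·I \ J` admits `y ∈ ℝ^{n²}`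
with `x ∈ y + I` and `|(I + y) ∩ I| > e⁻⁸·|I|`. -/
theorem exists_translate_large_overlap (n : ℕ) (hn : 2 ≤ n) (α : Fin (n ^ 2) → ℝ)
    (hα : ∀ i, 0 < α i) :
    ∀ x ∈ bigBox n α \ Jset n α, ∃ y : Fin (n ^ 2) → ℝ,
      x ∈ (fun z => y + z) '' box n α ∧
      ENNReal.ofReal (Real.exp (-8)) * volume (box n α) <
        volume (((fun z => y + z) '' box n α) ∩ box n α) := by
  classical
  rintro x ⟨hxB, hxJ⟩
  have ht₀ : (0 : ℝ) ≤ 1 / n := by positivity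
  have ht₁ : 1 / (n : ℝ) < 1 := by
    rw [div_lt_one (by positivity)]; exact_mod_cast hn
  have hcard : (Finset.univ.filter fun i => α i ≤ x i).card < 4 * n := by
    refine lt_of_not_ge fun hge => hxJ ⟨hxB, hge.trans (Finset.card_le_card fun i hi => ?_)⟩
    rw [Finset.mem_filter] at hi ⊢
    exact ⟨hi.1, hi.2, (hxB i (mem_univ i)).2⟩
  refine ⟨overlapShift (1 / n) α x, mem_overlapShift_add_image ht₁ hα hxB, ?_⟩
  have hα₀ : ∀ i, 0 ≤ α i := fun i => (hα i).le
  have hvol : volume (box n α) = ENNReal.ofReal (∏ i, α i) := by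
    simp only [box, Real.volume_pi_Ioo, sub_zero, ENNReal.ofReal_prod_of_nonneg fun i _ => hα₀ i]
  have hprod : 0 < ∏ i, α i := Finset.prod_pos fun i _ => hα i
  rw [hvol, ← ENNReal.ofReal_mul (Real.exp_pos _).le, box,
    volume_const_add_image_pi_Ioo_inter (overlapShift_nonneg ht₀ hα₀) (overlapShift_le ht₁.le hα₀),
    prod_sub_overlapShift, ENNReal.ofReal_lt_ofReal_iff (by positivity)]
  exact mul_lt_mul_of_pos_right (exp_neg_eight_lt_one_sub_inv_pow hn hcard) hprod
end

section
/- For n ≥ 1 let U_n = (0,2^{-n})^n × ∏_{i>n} T ⊆ T^ω, for 1 ≤ i ≤ n let e_{n,i} ∈ T^ω be the element whose i-th coordinate is 2^{-n} and all other coordinates are 0, and set U_{n,i} = U_n ∪ (e_{n,i} + U_n). Let D₀ = {U_{n,i} : n ≥ 1, 1 ≤ i ≤ n}. Then the maximal operator M_{D₀} is not of weak type (1,1); in fact, for every n ≥ 1, taking f_n = χ_{U_n} one has (1/3)·m({g ∈ T^ω : M_{D₀} f_n(g) > 1/3}) ≥ ((n+1)/3)·‖f_n‖_{L¹}. -/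
open MeasureTheory Filter Topology Set
open scoped ENNReal

/-! Each `U_{n,i}` contains `U_n` and has twice its measure, so `χ_{U_n}` has average `1/2 > 1/3`
on it, and `M_{D₀} χ_{U_n} > 1/3` on `U_n ∪ ⋃ᵢ (e_{n,i} + U_n)`. These `n + 1` translates of `U_n`
are pairwise disjoint, because `e_{n,i} + U_n` is the only one whose `i`-th coordinate lies in
`(2⁻ⁿ, 2·2⁻ⁿ)` rather than `(0, 2⁻ⁿ)`. Hence the level set has measure at least `(n + 1)·m(U_n)`,
while `‖χ_{U_n}‖₁ = m(U_n)`. -/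

instance : haarTω.IsAddHaarMeasure := Measure.isAddHaarMeasure_addHaarMeasure ⊤

instance inst_s12 : IsProbabilityMeasure haarTω := by
  constructor
  have h : haarTω (⊤ : TopologicalSpace.PositiveCompacts Tω) = 1 := Measure.addHaarMeasure_self
  simpa using h

lemma not_weakType11_of_forall_exists_le {bas : Tω → Set (Set Tω)} {lam : ℝ} (hlam : 0 < lam)
    (h : ∀ K : ℝ, ∃ f : Tω → ℝ, Integrable f haarTω ∧ 0 < ∫ x, |f x| ∂haarTω ∧
      K * ∫ x, |f x| ∂haarTω ≤ lam * (haarTω {g | maximalGT bas f g lam}).toReal) :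
    ¬ WeakType11 bas := by
  rintro ⟨C, -, hC⟩
  obtain ⟨f, hf, hpos, hK⟩ := h (C + 1)
  linarith [hC f hf lam hlam]

lemma coe_ne_coe_add_coe {l a b : ℝ} (hl : 2 * l ≤ 1) (ha : a ∈ Ioo 0 l) (hb : b ∈ Ioo 0 l) :
    (a : 𝕋) ≠ (l : 𝕋) + b := by
  rw [← AddCircle.coe_add, Ne, AddCircle.coe_eq_coe_iff_of_mem_Ico (p := 1) (a := 0)
    ⟨ha.1.le, by linarith [ha.2, hb.2]⟩ ⟨by linarith [ha.1, ha.2, hb.1], by linarith [hb.2]⟩]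
  linarith [ha.2, hb.1]

lemma mem_Ucell {n : ℕ} {x : Tω} : x ∈ Ucell n ↔ ∀ i < n, x i ∈ arc ((2 : ℝ)⁻¹ ^ n) := by
  simp only [Ucell, mem_univ_pi]
  refine forall_congr' fun i => ?_
  by_cases hi : i < n <;> simp [hi]

lemma isOpen_arc (l : ℝ) : IsOpen (arc l) :=
  QuotientAddGroup.isOpenMap_coe _ isOpen_Ioo

lemma isOpen_Ucell (n : ℕ) : IsOpen (Ucell n) := by
  have : Ucell n = ⋂ i ∈ Finset.range n, (fun g : Tω => g i) ⁻¹' arc ((2 : ℝ)⁻¹ ^ n) := by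
    ext x; simp [mem_Ucell]
  rw [this]
  exact isOpen_biInter_finset fun i _ => (isOpen_arc _).preimage (continuous_apply i)

lemma measure_Ucell_pos (n : ℕ) : 0 < haarTω (Ucell n) := by
  refine (isOpen_Ucell n).measure_pos haarTω ⟨fun _ => (((2 : ℝ)⁻¹ ^ (n + 1) : ℝ) : 𝕋),
    mem_Ucell.mpr fun _ _ => ⟨_, ⟨by positivity, ?_⟩, rfl⟩⟩
  exact pow_lt_pow_right_of_lt_one₀ (by norm_num) (by norm_num) n.lt_succ_self

lemma integral_abs_indicator_Ucell (n : ℕ) :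
    ∫ x, |(Ucell n).indicator (fun _ => (1 : ℝ)) x| ∂haarTω = (haarTω (Ucell n)).toReal := by
  simp_rw [abs_of_nonneg (indicator_nonneg (fun _ _ => zero_le_one) _)]
  simp [integral_indicator_const _ (isOpen_Ucell n).measurableSet, measureReal_def]

lemma evec_add_ne_add {n i : ℕ} {u v w : Tω} (hn : 1 ≤ n) (hi : i < n) (hw : w i = 0)
    (hu : u ∈ Ucell n) (hv : v ∈ Ucell n) : evec n i + u ≠ w + v := by
  intro h
  obtain ⟨a, ha, hav⟩ := mem_Ucell.mp hv i hi
  obtain ⟨b, hb, hbu⟩ := mem_Ucell.mp hu i hi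
  have hl : 2 * (2 : ℝ)⁻¹ ^ n ≤ 1 := by
    have := pow_le_pow_of_le_one (by norm_num : (0 : ℝ) ≤ 2⁻¹) (by norm_num) hn
    rw [pow_one] at this
    linarith
  have hi' := congrFun h i
  simp only [Pi.add_apply, evec, ↓reduceIte, hw, zero_add] at hi'
  refine coe_ne_coe_add_coe hl ha hb ?_
  rw [show (a : 𝕋) = v i from hav, ← hi', ← show (b : 𝕋) = u i from hbu]

lemma disjoint_Ucell_evec_add {n i : ℕ} (hn : 1 ≤ n) (hi : i < n) :
    Disjoint (Ucell n) ((evec n i + ·) '' Ucell n) := by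
  refine disjoint_left.mpr fun x hx ⟨u, hu, hux⟩ => evec_add_ne_add (w := 0) hn hi rfl hu hx ?_
  simpa using hux

lemma pairwiseDisjoint_evec_add {n : ℕ} (hn : 1 ≤ n) :
    (Finset.range n : Set ℕ).PairwiseDisjoint fun i => (evec n i + ·) '' Ucell n := by
  intro i hi j _ hij
  refine disjoint_left.mpr fun _ ⟨u, hu, hux⟩ ⟨v, hv, hvx⟩ =>
    evec_add_ne_add hn (Finset.mem_range.mp hi) ?_ hu hv (hux.trans hvx.symm)
  simp [evec, hij]

lemma measure_evec_add_Ucell (n i : ℕ) :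
    haarTω ((evec n i + ·) '' Ucell n) = haarTω (Ucell n) := by
  rw [image_add_left, measure_preimage_add]

lemma measurableSet_evec_add_Ucell (n i : ℕ) : MeasurableSet ((evec n i + ·) '' Ucell n) := by
  rw [image_add_left]
  exact (isOpen_Ucell n).measurableSet.preimage (measurable_const_add _)

lemma avg_indicator_Ucell_Uni {n i : ℕ} (hn : 1 ≤ n) (hi : i < n) :
    avg ((Ucell n).indicator fun _ => (1 : ℝ)) (Uni n i) = 1 / 2 := by
  have hU : haarTω (Ucell n) ≠ 0 := (measure_Ucell_pos n).ne'
  have hsub : Ucell n ⊆ Uni n i := subset_union_left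
  have hUni : haarTω (Uni n i) = 2 * haarTω (Ucell n) := by
    rw [Uni, measure_union (disjoint_Ucell_evec_add hn hi) (measurableSet_evec_add_Ucell n i),
      measure_evec_add_Ucell, two_mul]
  rw [avg, setAverage_eq, setIntegral_indicator (isOpen_Ucell n).measurableSet,
    inter_eq_right.mpr hsub, setIntegral_const, measureReal_def, measureReal_def, hUni,
    ENNReal.toReal_mul, ENNReal.toReal_ofNat, smul_eq_mul, smul_eq_mul, mul_one]
  field_simp [ENNReal.toReal_ne_zero.mpr ⟨hU, measure_ne_top _ _⟩]

lemma Ucell_union_evec_add_subset_maximalGT {n : ℕ} (hn : 1 ≤ n) :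
    Ucell n ∪ ⋃ i ∈ Finset.range n, (evec n i + ·) '' Ucell n ⊆
      {g | maximalGT (basisOf D0) ((Ucell n).indicator fun _ => (1 : ℝ)) g (1 / 3)} := by
  have hlevel : ∀ i < n, ∀ g ∈ Uni n i,
      maximalGT (basisOf D0) ((Ucell n).indicator fun _ => (1 : ℝ)) g (1 / 3) := fun i hi g hg =>
    ⟨Uni n i, ⟨⟨n, hn, i, hi, rfl⟩, subset_closure hg⟩, by
      rw [avg_indicator_Ucell_Uni hn hi]; norm_num⟩
  refine union_subset (fun g hg => hlevel 0 hn g (Or.inl hg)) (iUnion₂_subset fun i hi g hg => ?_)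
  exact hlevel i (Finset.mem_range.mp hi) g (Or.inr hg)

lemma measure_Ucell_union_evec_add {n : ℕ} (hn : 1 ≤ n) :
    haarTω (Ucell n ∪ ⋃ i ∈ Finset.range n, (evec n i + ·) '' Ucell n) =
      (n + 1) * haarTω (Ucell n) := by
  have hmeas : MeasurableSet (⋃ i ∈ Finset.range n, (evec n i + ·) '' Ucell n) :=
    Finset.measurableSet_biUnion _ fun i _ => measurableSet_evec_add_Ucell n i
  have hdisj : Disjoint (Ucell n) (⋃ i ∈ Finset.range n, (evec n i + ·) '' Ucell n) :=
    disjoint_iUnion₂_right.mpr fun i hi => disjoint_Ucell_evec_add hn (Finset.mem_range.mp hi)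
  rw [measure_union hdisj hmeas,
    measure_biUnion_finset (pairwiseDisjoint_evec_add hn)
      fun i _ => measurableSet_evec_add_Ucell n i]
  simp only [measure_evec_add_Ucell, Finset.sum_const, Finset.card_range, nsmul_eq_mul]
  ring

lemma succ_div_three_mul_integral_le_measure_maximalGT {n : ℕ} (hn : 1 ≤ n) :
    ((n : ℝ) + 1) / 3 * ∫ x, |(Ucell n).indicator (fun _ => (1 : ℝ)) x| ∂haarTω ≤
      1 / 3 * (haarTω {g | maximalGT (basisOf D0)
        ((Ucell n).indicator fun _ => (1 : ℝ)) g (1 / 3)}).toReal := by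
  have h := ENNReal.toReal_mono (measure_ne_top _ _)
    ((measure_Ucell_union_evec_add hn).symm.trans_le
      (measure_mono (Ucell_union_evec_add_subset_maximalGT hn)))
  simp only [ENNReal.toReal_mul, ENNReal.toReal_add (ENNReal.natCast_ne_top n) ENNReal.one_ne_top,
    ENNReal.toReal_natCast, ENNReal.toReal_one] at h
  rw [integral_abs_indicator_Ucell]
  linarith

/-- The maximal operator of `D₀ = {U_{n,i}}` is not of weak type (1,1);
in fact for every `n ≥ 1`, with `fₙ = χ_{Uₙ}`,
`(1/3)·m({M_{D₀} fₙ > 1/3}) ≥ ((n+1)/3)·‖fₙ‖₁`. -/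
theorem D0_maximal_not_weakType11 :
    ¬ WeakType11 (basisOf D0) ∧
    ∀ n : ℕ, 1 ≤ n →
      ((n : ℝ) + 1) / 3 * ∫ x, |(Ucell n).indicator (fun _ => (1 : ℝ)) x| ∂haarTω ≤
        1 / 3 * (haarTω {g | maximalGT (basisOf D0)
          ((Ucell n).indicator fun _ => (1 : ℝ)) g (1 / 3)}).toReal := by
  refine ⟨not_weakType11_of_forall_exists_le (lam := 1 / 3) (by norm_num) fun K => ?_,
    fun n hn => succ_div_three_mul_integral_le_measure_maximalGT hn⟩
  obtain ⟨n, hKn⟩ := exists_nat_gt (3 * K)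
  refine ⟨_, (integrable_const (1 : ℝ)).indicator (isOpen_Ucell (n + 1)).measurableSet, ?_,
    le_trans ?_ (succ_div_three_mul_integral_le_measure_maximalGT (Nat.le_add_left 1 n))⟩
  all_goals rw [integral_abs_indicator_Ucell]
  · exact ENNReal.toReal_pos (measure_Ucell_pos _).ne' (measure_ne_top _ _)
  · gcongr
    push_cast
    linarith
end
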